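/- arXiv:0810.0587 — 6 statements merged into one kernel-verified Lean document; each statement's English description precedes it below -/
import Mathlib

section
/- Let X be a real Banach space. If the dual norm of X* is Fréchet differentiable at every nonzero point of X*, then X is reflexive. -/
/-!
Let `G ∈ X**` have norm one. Ekeland's principle for `G` on the unit ball of `X*` (this is the
Bishop–Phelps argument) yields `v` with `G v` close to `1` such that `G - ε‖· - v‖` is maximal
on the ball at `v`. Rescaling `v + t • p` back to the sphere shows `G p ≤ ε‖p‖` on the kernel of
the derivative `D` of the dual norm at `v`, so `‖G - D‖` is small. By Šmulian's argument `D` is a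
norm limit of evaluations at almost norming points of the unit ball of `X`. Hence the canonical
image of `X` is dense in `X**`, and it is closed because `X` is complete.
-/

open Filter Topology Set NormedSpace

section Ekeland

variable {α : Type*} [MetricSpace α] {f : α → ℝ} {ε : ℝ}

def improvementSet (f : α → ℝ) (ε : ℝ) (x : α) : Set α :=
  {y | f x + ε * dist y x ≤ f y}

theorem self_mem_improvementSet (x : α) : x ∈ improvementSet f ε x := by
  simp [improvementSet]

theorem le_of_mem_improvementSet (hε : 0 ≤ ε) {x y : α} (hy : y ∈ improvementSet f ε x) :
    f x ≤ f y := by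
  have : f x + ε * dist y x ≤ f y := hy
  nlinarith [dist_nonneg (x := y) (y := x)]

theorem improvementSet_trans (hε : 0 ≤ ε) {x y w : α} (hy : y ∈ improvementSet f ε x)
    (hw : w ∈ improvementSet f ε y) : w ∈ improvementSet f ε x := by
  have := dist_triangle w y x
  simp only [improvementSet, mem_ofPred_eq] at *
  nlinarith

theorem isClosed_improvementSet (hf : UpperSemicontinuous f) (x : α) :
    IsClosed (improvementSet f ε x) := by
  have hg : UpperSemicontinuous fun y => f y + -(ε * dist y x) :=
    hf.add (continuous_const.mul (continuous_id.dist continuous_const)).neg.upperSemicontinuous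
  convert hg.isClosed_preimage (f x) using 1
  ext y
  simp only [improvementSet, mem_ofPred_eq, mem_preimage, mem_Ici]
  constructor <;> intro h <;> linarith

theorem exists_mem_improvementSet_forall_le_add (hbdd : BddAbove (range f)) (x : α) {δ : ℝ}
    (hδ : 0 < δ) (hε : 0 ≤ ε) :
    ∃ y ∈ improvementSet f ε x, ∀ w ∈ improvementSet f ε y, f w ≤ f y + δ := by
  have hne : (f '' improvementSet f ε x).Nonempty := ⟨f x, x, self_mem_improvementSet x, rfl⟩
  have hbdd' : BddAbove (f '' improvementSet f ε x) := hbdd.mono (image_subset_range _ _)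
  obtain ⟨-, ⟨y, hy, rfl⟩, hlt⟩ := exists_lt_of_lt_csSup hne (sub_lt_self _ hδ)
  refine ⟨y, hy, fun w hw => ?_⟩
  have := le_csSup hbdd' (mem_image_of_mem f (improvementSet_trans hε hy hw))
  linarith

theorem exists_le_forall_le_add_mul_dist [CompleteSpace α] (hf : UpperSemicontinuous f)
    (hbdd : BddAbove (range f)) (hε : 0 < ε) (x₀ : α) :
    ∃ z, f x₀ ≤ f z ∧ ∀ y, f y ≤ f z + ε * dist y z := by
  let S := improvementSet f ε
  choose! next hnext_mem hnext_le using
    fun x (n : ℕ) => exists_mem_improvementSet_forall_le_add hbdd x (δ := ε * (1 / 2) ^ n)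
      (by positivity) hε.le
  let x : ℕ → α := fun n => Nat.rec x₀ (fun n xn => next xn n) n
  have hx_succ (n : ℕ) : x (n + 1) ∈ S (x n) := hnext_mem _ _
  have hx_le (n : ℕ) : ∀ w ∈ S (x (n + 1)), f w ≤ f (x (n + 1)) + ε * (1 / 2) ^ n :=
    hnext_le _ _
  have hx_mono {n m : ℕ} (hnm : n ≤ m) : x m ∈ S (x n) := by
    induction m, hnm using Nat.le_induction with
    | base => exact self_mem_improvementSet _
    | succ m _ ih => exact improvementSet_trans hε.le ih (hx_succ m)
  have hdist (n : ℕ) : ∀ w ∈ S (x (n + 1)), dist w (x (n + 1)) ≤ (1 / 2) ^ n := fun w hw => by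
    have hw' : f (x (n + 1)) + ε * dist w (x (n + 1)) ≤ f w := hw
    exact le_of_mul_le_mul_left (by linarith [hx_le n w hw]) hε
  have hcauchy : CauchySeq fun n => x (n + 1) :=
    cauchySeq_of_le_geometric (1 / 2) 1 (by norm_num) fun n => by
      rw [dist_comm, one_mul]; exact hdist n _ (hx_succ (n + 1))
  obtain ⟨z, hz⟩ := cauchySeq_tendsto_of_complete hcauchy
  have hzS (n : ℕ) : z ∈ S (x n) :=
    (isClosed_improvementSet hf _).mem_of_tendsto hz
      (eventually_atTop.mpr ⟨n, fun m hm => hx_mono (by omega : n ≤ m + 1)⟩)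
  refine ⟨z, le_of_mem_improvementSet hε.le (hzS 0), fun w => ?_⟩
  by_contra! hw
  have hwS (n : ℕ) : w ∈ S (x (n + 1)) := improvementSet_trans hε.le (hzS (n + 1)) hw.le
  have hfw (n : ℕ) : f w ≤ f z + ε * (1 / 2) ^ n := by
    linarith [hx_le n w (hwS n), le_of_mem_improvementSet hε.le (hzS (n + 1))]
  have hlim : Tendsto (fun n : ℕ => f z + ε * (1 / 2) ^ n) atTop (𝓝 (f z)) := by
    simpa using tendsto_const_nhds.add ((tendsto_pow_atTop_nhds_zero_of_lt_one (by norm_num)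
      (by norm_num : (1 / 2 : ℝ) < 1)).const_mul ε)
  linarith [ge_of_tendsto' hlim hfw, mul_nonneg hε.le (dist_nonneg (x := w) (y := z))]

end Ekeland

section

variable {E : Type*} [NormedAddCommGroup E] [NormedSpace ℝ E]

theorem StrongDual.exists_lt_apply_of_lt_norm (φ : StrongDual ℝ E) {r : ℝ} (hr : r < ‖φ‖) :
    ∃ x, ‖x‖ < 1 ∧ r < φ x := by
  obtain ⟨x, hx, hrx⟩ := φ.exists_lt_apply_of_lt_opNorm hr
  rcases le_or_gt 0 (φ x) with h | h
  · exact ⟨x, hx, by rwa [Real.norm_of_nonneg h] at hrx⟩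
  · exact ⟨-x, by rwa [norm_neg], by rwa [map_neg, ← Real.norm_of_nonpos h.le]⟩

theorem StrongDual.norm_le_of_forall_apply_le (φ : StrongDual ℝ E) {c : ℝ}
    (h : ∀ x, ‖x‖ ≤ 1 → φ x ≤ c) : ‖φ‖ ≤ c := by
  have hc : 0 ≤ c := by simpa using h 0 (by simp)
  refine φ.opNorm_le_of_unit_norm hc fun x hx => abs_le.mpr ⟨?_, h x hx.le⟩
  have := h (-x) (by rw [norm_neg, hx])
  rw [map_neg] at this
  linarith

theorem mul_apply_sub_le_of_forall_norm_le {G : StrongDual ℝ E} {v p : E} {ε t : ℝ}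
    (hε : 0 ≤ ε) (ht : 0 < t) (hvp : 0 < ‖v + t • p‖)
    (hmax : ∀ f, ‖f‖ ≤ ‖v‖ → G f ≤ G v + ε * ‖f - v‖) :
    t * (‖v‖ * (G p - ε * ‖p‖)) ≤
      (‖v + t • p‖ - ‖v‖) * G v + ε * ‖v‖ * |‖v + t • p‖ - ‖v‖| := by
  -- test `hmax` at the point `c • (v + t • p)` of norm `‖v‖`
  set n := ‖v + t • p‖
  set c := ‖v‖ / n
  have hc : c * n = ‖v‖ := div_mul_cancel₀ _ hvp.ne'
  have hc₀ : 0 ≤ c := by positivity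
  clear_value c
  have hc_abs : |c - 1| * n = |n - ‖v‖| := by
    rw [← abs_of_pos hvp, ← abs_mul, abs_of_pos hvp, sub_mul, hc, one_mul, abs_sub_comm]
  have hf : ‖c • (v + t • p)‖ ≤ ‖v‖ := by
    rw [norm_smul, Real.norm_of_nonneg hc₀]
    exact hc.le
  have hGf : G (c • (v + t • p)) = c * (G v + t * G p) := by simp [mul_add]
  have hdist : ‖c • (v + t • p) - v‖ ≤ |c - 1| * ‖v‖ + c * t * ‖p‖ := by
    have : c • (v + t • p) - v = (c - 1) • v + (c * t) • p := by module
    rw [this]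
    refine (norm_add_le _ _).trans_eq ?_
    rw [norm_smul, norm_smul, Real.norm_eq_abs, Real.norm_of_nonneg (by positivity)]
  have hineq := mul_le_mul_of_nonneg_left
    ((hGf ▸ hmax _ hf).trans (add_le_add_right (mul_le_mul_of_nonneg_left hdist hε) _)) hvp.le
  linear_combination hineq - (G v + t * G p - t * ε * ‖p‖) * hc + ε * ‖v‖ * hc_abs

theorem apply_le_of_fderiv_norm_apply_eq_zero {G : StrongDual ℝ E} {v p : E} {ε : ℝ}
    (hε : 0 ≤ ε) (hv : v ≠ 0) (hd : DifferentiableAt ℝ (‖·‖) v)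
    (hmax : ∀ f, ‖f‖ ≤ ‖v‖ → G f ≤ G v + ε * ‖f - v‖) (hp : fderiv ℝ (‖·‖) v p = 0) :
    G p ≤ ε * ‖p‖ := by
  have hv₀ : 0 < ‖v‖ := norm_pos_iff.mpr hv
  set n : ℝ → ℝ := fun t => ‖v + t • p‖
  have hn : HasDerivAt n 0 0 := by
    have := hd.hasFDerivAt.comp_hasDerivAt_of_eq (0 : ℝ)
      (((hasDerivAt_id (0 : ℝ)).smul_const p).const_add v) (by simp)
    simpa [hp, Function.comp_def, n] using this
  have hslope : Tendsto (fun t => (n t - ‖v‖) / t) (𝓝[>] 0) (𝓝 0) := by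
    have := (hasDerivAt_iff_tendsto_slope.mp hn).mono_left (nhdsGT_le_nhdsNE 0)
    simpa [slope_fun_def_field, n] using this
  have hpos : ∀ᶠ t in 𝓝[>] 0, 0 < n t := by
    have hn₀ : 0 < n 0 := by simpa [n] using hv₀
    exact (hn.continuousAt.eventually (eventually_gt_nhds hn₀)).filter_mono nhdsWithin_le_nhds
  have hkey : ∀ᶠ t in 𝓝[>] (0 : ℝ),
      ‖v‖ * (G p - ε * ‖p‖) ≤ (n t - ‖v‖) / t * G v + ε * ‖v‖ * |(n t - ‖v‖) / t| := by
    filter_upwards [hpos, self_mem_nhdsWithin] with t hnt (ht : 0 < t)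
    rw [abs_div, abs_of_pos ht, show ∀ a b : ℝ, a / t * G v + ε * ‖v‖ * (b / t) =
      (a * G v + ε * ‖v‖ * b) / t from fun a b => by ring, le_div_iff₀ ht, mul_comm]
    exact mul_apply_sub_le_of_forall_norm_le hε ht hnt hmax
  have hlim : Tendsto (fun t => (n t - ‖v‖) / t * G v + ε * ‖v‖ * |(n t - ‖v‖) / t|)
      (𝓝[>] 0) (𝓝 0) := by
    simpa using (hslope.mul_const (G v)).add (hslope.abs.const_mul (ε * ‖v‖))
  nlinarith [ge_of_tendsto hlim hkey]

theorem norm_sub_fderiv_norm_le {G : StrongDual ℝ E} {v : E} {ε : ℝ} (hε : 0 ≤ ε)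
    (hG : ‖G‖ ≤ 1) (hv : v ≠ 0) (hd : DifferentiableAt ℝ (‖·‖) v)
    (hmax : ∀ f, ‖f‖ ≤ ‖v‖ → G f ≤ G v + ε * ‖f - v‖) :
    ‖G - fderiv ℝ (‖·‖) v‖ ≤ 2 * ε + (1 - G v / ‖v‖) := by
  set D := fderiv ℝ (‖·‖) v
  have hv₀ : 0 < ‖v‖ := norm_pos_iff.mpr hv
  have hD : ‖D‖ ≤ 1 := by
    simpa using norm_fderiv_le_of_lipschitz ℝ (x₀ := v) (lipschitzWith_one_norm (E := E))
  have hGv : G v ≤ ‖v‖ :=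
    (le_abs_self _).trans ((G.le_opNorm v).trans (by nlinarith [norm_nonneg v]))
  refine (G - D).norm_le_of_forall_apply_le fun g hg => ?_
  have hDg : |D g| ≤ 1 := (D.le_opNorm g).trans (by nlinarith [norm_nonneg g, norm_nonneg D])
  -- split `g` along `v` and `ker D`
  set a := D g / ‖v‖
  have hp : D (g - a • v) = 0 := by
    simp [D, a, hd.fderiv_norm_self, hv₀.ne']
  have hp_norm : ‖g - a • v‖ ≤ 2 := by
    have : ‖a • v‖ = |D g| := by
      rw [norm_smul, Real.norm_eq_abs, abs_div, abs_of_pos hv₀, div_mul_cancel₀ _ hv₀.ne']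
    linarith [norm_sub_le g (a • v)]
  have hGp := apply_le_of_fderiv_norm_apply_eq_zero hε hv hd hmax hp
  have ha : a * (G v - ‖v‖) ≤ 1 - G v / ‖v‖ := by
    have habs : |a| ≤ ‖v‖⁻¹ := by
      rw [abs_div, abs_of_pos hv₀, div_eq_mul_inv]
      exact mul_le_of_le_one_left (by positivity) hDg
    calc a * (G v - ‖v‖) ≤ |a| * (‖v‖ - G v) := (le_abs_self _).trans_eq <| by
          rw [abs_mul, abs_of_nonpos (sub_nonpos.2 hGv), neg_sub]
      _ ≤ ‖v‖⁻¹ * (‖v‖ - G v) := by gcongr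
      _ = 1 - G v / ‖v‖ := by field_simp
  calc (G - D) g = G (g - a • v) + a * (G v - ‖v‖) := by
        simp [D, a]
        field_simp
        ring
    _ ≤ ε * 2 + (1 - G v / ‖v‖) := by gcongr; exact hGp.trans (by gcongr)
    _ = 2 * ε + (1 - G v / ‖v‖) := by ring

theorem StrongDual.exists_forall_norm_le_one_apply_le_add [CompleteSpace E]
    (G : StrongDual ℝ E) {ε : ℝ} (hε : 0 < ε) {u : E} (hu : ‖u‖ ≤ 1) :
    ∃ v, ‖v‖ ≤ 1 ∧ G u ≤ G v ∧ ∀ f, ‖f‖ ≤ 1 → G f ≤ G v + ε * ‖f - v‖ := by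
  let B := Metric.closedBall (0 : E) 1
  have : CompleteSpace B := Metric.isClosed_closedBall.completeSpace_coe
  have hbdd : BddAbove (range fun f : B => G f) := by
    refine ⟨‖G‖, ?_⟩
    rintro - ⟨⟨f, hf⟩, rfl⟩
    exact (le_abs_self _).trans ((G.le_opNorm f).trans
      (mul_le_of_le_one_right (norm_nonneg G) (mem_closedBall_zero_iff.mp hf)))
  obtain ⟨⟨v, hv⟩, hGuv, hmax⟩ := exists_le_forall_le_add_mul_dist
    (G.continuous.comp continuous_subtype_val).upperSemicontinuous hbdd hε
    (⟨u, mem_closedBall_zero_iff.mpr hu⟩ : B)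
  exact ⟨v, mem_closedBall_zero_iff.mp hv, hGuv, fun f hf =>
    by simpa [Subtype.dist_eq, dist_eq_norm] using hmax ⟨f, mem_closedBall_zero_iff.mpr hf⟩⟩

theorem fderiv_norm_mem_closure_range_inclusionInDoubleDual {v : StrongDual ℝ E}
    (hd : DifferentiableAt ℝ (‖·‖) v) :
    fderiv ℝ (‖·‖) v ∈ closure (range (inclusionInDoubleDual ℝ E)) := by
  set D := fderiv ℝ (‖·‖) v
  refine (Metric.mem_closure_iff (α := StrongDual ℝ (StrongDual ℝ E))).mpr fun δ hδ => ?_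
  obtain ⟨t, ht, hsmooth⟩ := Metric.nhds_basis_closedBall.eventually_iff.mp
    ((hasFDerivAt_iff_isLittleO_nhds_zero.mp hd.hasFDerivAt).def (by positivity : 0 < δ / 4))
  obtain ⟨x, hx, hvx⟩ :=
    v.exists_lt_apply_of_lt_norm (sub_lt_self ‖v‖ (by positivity : 0 < t * δ / 4))
  refine ⟨inclusionInDoubleDual ℝ E x, mem_range_self x, ?_⟩
  rw [dist_comm, dist_eq_norm (E := StrongDual ℝ (StrongDual ℝ E))]
  refine lt_of_le_of_lt ((inclusionInDoubleDual ℝ E x - D).norm_le_of_forall_apply_le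
    fun g hg => ?_) (half_lt_self hδ)
  have htg : ‖t • g‖ ≤ t := by
    rw [norm_smul, Real.norm_of_nonneg ht.le]; exact mul_le_of_le_one_right ht.le hg
  have h1 := hsmooth (mem_closedBall_zero_iff.mpr htg)
  have h2 : v x + t * g x ≤ ‖v + t • g‖ :=
    calc v x + t * g x = (v + t • g) x := by simp
      _ ≤ ‖v + t • g‖ := (le_abs_self _).trans (((v + t • g).le_opNorm x).trans
          (mul_le_of_le_one_right (norm_nonneg _) hx.le))
  have h3 : t * (g x - D g) ≤ t * (δ / 2) := by
    have := (le_abs_self _).trans h1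
    rw [map_smul, smul_eq_mul] at this
    nlinarith [mul_le_mul_of_nonneg_left htg (by positivity : 0 ≤ δ / 4)]
  simpa using le_of_mul_le_mul_left h3 ht

theorem mem_closure_range_inclusionInDoubleDual_of_norm_eq_one
    (h : ∀ f : StrongDual ℝ E, f ≠ 0 → DifferentiableAt ℝ (‖·‖) f)
    {G : StrongDual ℝ (StrongDual ℝ E)} (hG : ‖G‖ = 1) :
    G ∈ closure (range (inclusionInDoubleDual ℝ E)) := by
  rw [← closure_closure]
  refine (Metric.mem_closure_iff (α := StrongDual ℝ (StrongDual ℝ E))).mpr fun δ hδ => ?_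
  obtain ⟨u, hu, hGu⟩ := G.exists_lt_apply_of_lt_norm (r := max (1 - δ / 2) 0)
    (by rw [hG]; exact max_lt (by linarith) one_pos)
  obtain ⟨v, hv, hGuv, hmax⟩ :=
    G.exists_forall_norm_le_one_apply_le_add (by positivity : 0 < δ / 4) hu.le
  have hGv : max (1 - δ / 2) 0 < G v := hGu.trans_le hGuv
  have hv₀ : v ≠ 0 := by
    rintro rfl
    simp at hGv
  have hd := h v hv₀
  refine ⟨_, fderiv_norm_mem_closure_range_inclusionInDoubleDual hd, ?_⟩
  rw [dist_eq_norm (E := StrongDual ℝ (StrongDual ℝ E))]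
  have hGD := norm_sub_fderiv_norm_le (by positivity) hG.le hv₀ hd
    fun f hf => hmax f (hf.trans hv)
  have : G v ≤ G v / ‖v‖ :=
    le_div_self ((le_max_right _ _).trans hGv.le) (norm_pos_iff.mpr hv₀) hv
  linarith [le_max_left (1 - δ / 2) 0]

end

/-- If the dual norm of `X*` is Fréchet differentiable at every nonzero point of `X*`,
then the real Banach space `X` is reflexive (the canonical embedding of `X` into its
double dual is surjective). -/
theorem reflexive_of_dual_norm_frechetDifferentiable {X : Type*} [NormedAddCommGroup X]
    [NormedSpace ℝ X] [CompleteSpace X]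
    (h : ∀ f : X →L[ℝ] ℝ, f ≠ 0 → DifferentiableAt ℝ (fun g : X →L[ℝ] ℝ => ‖g‖) f) :
    Function.Surjective (NormedSpace.inclusionInDoubleDual ℝ X) := by
  intro G
  obtain rfl | hG := eq_or_ne G 0
  · exact ⟨0, map_zero _⟩
  have hclosed : IsClosed (range (inclusionInDoubleDual ℝ X)) :=
    (show Isometry (inclusionInDoubleDual ℝ X) from
      (inclusionInDoubleDualLi ℝ).isometry).isClosedEmbedding.isClosed_range
  have hG₁ : ‖‖G‖⁻¹ • G‖ = 1 := by
    simpa using norm_smul_inv_norm (𝕜 := ℝ) (E := StrongDual ℝ (StrongDual ℝ X)) hG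
  obtain ⟨x, hx⟩ : ‖G‖⁻¹ • G ∈ range (inclusionInDoubleDual ℝ X) :=
    hclosed.closure_eq ▸ mem_closure_range_inclusionInDoubleDual_of_norm_eq_one h hG₁
  have hG₀ : ‖G‖ ≠ 0 := (norm_ne_zero_iff (E := StrongDual ℝ (StrongDual ℝ X))).mpr hG
  exact ⟨‖G‖ • x, by rw [map_smul, hx, smul_inv_smul₀ hG₀]⟩
end

section
/- Let X be a real Banach space, let φ : X → ℝ be Lipschitz, let x ∈ X, and let y₀ ∈ X with ‖y₀‖ = 1 be such that the directional derivative lim_{t→0} (φ(x + t y₀) − φ(x))/t exists and equals F_φ(x). Suppose the norm of X is Gateaux differentiable at y₀ with Gateaux derivative f_{y₀} ∈ X*. Then φ is Gateaux differentiable at x and for every y ∈ X, ⟨φ'(x), y⟩ = F_φ(x) · f_{y₀}(y). -/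
open Filter Topology

/-- A function `f : X → ℝ` is Gateaux differentiable at `x` with Gateaux derivative the
continuous linear functional `A` if for every `y`, `(f (x + t y) - f x)/t → A y` as `t → 0`. -/
def GateauxDiffAt {X : Type*} [NormedAddCommGroup X] [NormedSpace ℝ X]
    (f : X → ℝ) (x : X) (A : X →L[ℝ] ℝ) : Prop :=
  ∀ y : X, Tendsto (fun t : ℝ => (f (x + t • y) - f x) / t) (𝓝[≠] 0) (𝓝 (A y))

/-- `F_φ(x) = sup_{‖y‖=1} sup_{z ∈ X} limsup_{t→0⁺} (φ(x+tz+ty) - φ(x+tz))/t`. -/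
noncomputable def Fsup {X : Type*} [NormedAddCommGroup X] [NormedSpace ℝ X]
    (φ : X → ℝ) (x : X) : ℝ :=
  ⨆ y : {y : X // ‖y‖ = 1}, ⨆ z : X,
    limsup (fun t : ℝ => (φ (x + t • z + t • (y : X)) - φ (x + t • z)) / t) (𝓝[>] 0)

/-!
Write `M = Fsup φ x`. By positive homogeneity of the shifted difference quotients and the
substitution `t ↦ -t`, `(φ (x + t z + t v) - φ (x + t z)) / t` is eventually below `M ‖v‖ + ε`
as `t → 0` from either side. Given a direction `y` and a small `s > 0`, split the step from `x` to
`x + t y₀` into `t (s y)` followed by `t (y₀ - s y)`. The slope along `y₀` tends to `M` and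
`‖y₀ - s y‖ ≤ 1 - s f_{y₀}(y) + o(s)`, so the slope along `s y` is eventually at least
`s M f_{y₀}(y) - o(s)`. This lower bound, applied to `y` and `-y`, gives the limit.
-/

open Set

theorem map_mul_left_nhdsNE_zero {G₀ : Type*} [GroupWithZero G₀] [TopologicalSpace G₀]
    [SeparatelyContinuousMul G₀] {c : G₀} (hc : c ≠ 0) : map (c * ·) (𝓝[≠] 0) = 𝓝[≠] 0 := by
  have h := (Homeomorph.mulLeft₀ c hc).isEmbedding.map_nhdsWithin_eq {0}ᶜ 0
  rw [image_compl_eq (Homeomorph.mulLeft₀ c hc).bijective, image_singleton,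
    Homeomorph.coe_mulLeft₀] at h
  simpa using h

theorem eventually_nhdsNE_zero_of_mul_left {G₀ : Type*} [GroupWithZero G₀] [TopologicalSpace G₀]
    [SeparatelyContinuousMul G₀] {c : G₀} (hc : c ≠ 0) {p : G₀ → Prop}
    (h : ∀ᶠ t in 𝓝[≠] 0, p (c * t)) : ∀ᶠ t in 𝓝[≠] 0, p t :=
  map_mul_left_nhdsNE_zero hc ▸ eventually_map.2 h

theorem eventually_nhdsNE_zero_neg {G : Type*} [AddGroup G] [TopologicalSpace G]
    [ContinuousNeg G] {p : G → Prop} (h : ∀ᶠ t in 𝓝[≠] 0, p t) :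
    ∀ᶠ t in 𝓝[≠] 0, p (-t) := by
  rw [← neg_zero, ← neg_nhdsNE] at h
  exact h

section

variable {X : Type*} [NormedAddCommGroup X] [NormedSpace ℝ X]

theorem GateauxDiffAt.const_mul {f : X → ℝ} {x : X} {A : X →L[ℝ] ℝ}
    (hf : GateauxDiffAt f x A) (c : ℝ) : GateauxDiffAt (fun y => c * f y) x (c • A) := by
  intro y
  simpa only [FunLike.coe_smul, Pi.smul_apply, smul_eq_mul, ← mul_sub, mul_div_assoc] using
    (hf y).const_mul c

theorem GateauxDiffAt.eventually_lt {f : X → ℝ} {x : X} {A : X →L[ℝ] ℝ}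
    (hf : GateauxDiffAt f x A) (y : X) {b : ℝ} (hb : A y < b) :
    ∀ᶠ t in 𝓝[>] 0, f (x + t • y) < f x + t * b := by
  have hright := (hf y).mono_left (nhdsWithin_mono 0 fun t (ht : 0 < t) => ht.ne')
  filter_upwards [hright.eventually_lt_const hb, self_mem_nhdsWithin] with t hlt (ht : 0 < t)
  rw [div_lt_iff₀ ht] at hlt
  linarith

theorem gateauxDiffAt_of_forall_eventually_lt {f : X → ℝ} {x : X} {A : X →L[ℝ] ℝ}
    (h : ∀ y, ∀ a < A y, ∀ᶠ t in 𝓝[≠] 0, a < (f (x + t • y) - f x) / t) :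
    GateauxDiffAt f x A := by
  intro y
  refine tendsto_order.2 ⟨fun a ha => h y a ha, fun b hb => ?_⟩
  have hneg := eventually_nhdsNE_zero_neg (h (-y) (-b) (by simpa using hb))
  filter_upwards [hneg] with t ht
  rw [neg_smul_neg, div_neg, neg_lt_neg_iff] at ht
  exact ht

/-- `Fsup φ x` is `⨆ y, ⨆ z, limsup (shiftedSlope φ x z y) (𝓝[>] 0)` definitionally. -/
noncomputable def shiftedSlope (φ : X → ℝ) (x z y : X) (t : ℝ) : ℝ :=
  (φ (x + t • z + t • y) - φ (x + t • z)) / t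

theorem shiftedSlope_smul (φ : X → ℝ) (x z y : X) (c t : ℝ) :
    shiftedSlope φ x (c • z) (c • y) t = c * shiftedSlope φ x z y (c * t) := by
  rcases eq_or_ne c 0 with rfl | hc
  · simp [shiftedSlope]
  rcases eq_or_ne t 0 with rfl | ht
  · simp [shiftedSlope]
  simp only [shiftedSlope, smul_smul, mul_comm t c]
  field_simp

theorem shiftedSlope_neg (φ : X → ℝ) (x z y : X) (t : ℝ) :
    shiftedSlope φ x z y (-t) = shiftedSlope φ x (-z - y) y t := by
  simp only [shiftedSlope]
  rw [show x + t • (-z - y) + t • y = x + (-t) • z by module,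
    show x + t • (-z - y) = x + (-t) • z + (-t) • y by module, div_neg, ← neg_div, neg_sub]

theorem LipschitzWith.abs_shiftedSlope_le {L : NNReal} {φ : X → ℝ} (hφ : LipschitzWith L φ)
    (x z y : X) (t : ℝ) : |shiftedSlope φ x z y t| ≤ L * ‖y‖ := by
  rcases eq_or_ne t 0 with rfl | ht
  · simp only [shiftedSlope, div_zero, abs_zero]
    positivity
  have hlip := hφ.dist_le_mul (x + t • z + t • y) (x + t • z)
  rw [Real.dist_eq, dist_eq_norm, add_sub_cancel_left, norm_smul, Real.norm_eq_abs] at hlip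
  rw [shiftedSlope, abs_div, div_le_iff₀ (abs_pos.2 ht)]
  linarith

theorem LipschitzWith.isBoundedUnder_le_shiftedSlope {L : NNReal} {φ : X → ℝ}
    (hφ : LipschitzWith L φ) (x z y : X) (l : Filter ℝ) :
    IsBoundedUnder (· ≤ ·) l (shiftedSlope φ x z y) :=
  isBoundedUnder_of_eventually_le <| .of_forall fun t =>
    le_of_abs_le (hφ.abs_shiftedSlope_le x z y t)

theorem LipschitzWith.limsup_shiftedSlope_le {L : NNReal} {φ : X → ℝ} (hφ : LipschitzWith L φ)
    (x z y : X) : limsup (shiftedSlope φ x z y) (𝓝[>] 0) ≤ L * ‖y‖ :=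
  limsup_le_of_le
    (isCoboundedUnder_le_of_le _ fun t => neg_le_of_abs_le (hφ.abs_shiftedSlope_le x z y t))
    (.of_forall fun t => le_of_abs_le (hφ.abs_shiftedSlope_le x z y t))

theorem LipschitzWith.limsup_shiftedSlope_le_Fsup {L : NNReal} {φ : X → ℝ}
    (hφ : LipschitzWith L φ) (x z : X) {y : X} (hy : ‖y‖ = 1) :
    limsup (shiftedSlope φ x z y) (𝓝[>] 0) ≤ Fsup φ x := by
  have hbound : ∀ (u : {y : X // ‖y‖ = 1}) (z : X),
      limsup (shiftedSlope φ x z u) (𝓝[>] 0) ≤ L := fun u z => by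
    simpa [u.2] using hφ.limsup_shiftedSlope_le x z u
  calc limsup (shiftedSlope φ x z y) (𝓝[>] 0)
      ≤ ⨆ z, limsup (shiftedSlope φ x z y) (𝓝[>] 0) :=
        le_ciSup (f := fun z => limsup (shiftedSlope φ x z y) (𝓝[>] 0))
          ⟨L, forall_mem_range.2 (hbound ⟨y, hy⟩)⟩ z
    _ ≤ Fsup φ x :=
        le_ciSup (f := fun u : {y : X // ‖y‖ = 1} => ⨆ z, limsup (shiftedSlope φ x z u) (𝓝[>] 0))
          ⟨L, forall_mem_range.2 fun u => ciSup_le (hbound u)⟩ ⟨y, hy⟩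

theorem LipschitzWith.eventually_shiftedSlope_lt_nhdsGT {L : NNReal} {φ : X → ℝ}
    (hφ : LipschitzWith L φ) (x z y : X) {a : ℝ} (ha : Fsup φ x * ‖y‖ < a) :
    ∀ᶠ t in 𝓝[>] 0, shiftedSlope φ x z y t < a := by
  rcases eq_or_ne y 0 with rfl | hy
  · simpa [shiftedSlope] using ha
  set c := ‖y‖
  have hc : 0 < c := norm_pos_iff.2 hy
  have hunit : limsup (shiftedSlope φ x (c⁻¹ • z) (c⁻¹ • y)) (𝓝[>] 0) < c⁻¹ * a := by
    refine (hφ.limsup_shiftedSlope_le_Fsup x _ (norm_smul_inv_norm hy)).trans_lt ?_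
    rwa [inv_mul_eq_div, lt_div_iff₀ hc]
  filter_upwards [eventually_nhdsGT_zero_mul_left hc
    (eventually_lt_of_limsup_lt hunit (hφ.isBoundedUnder_le_shiftedSlope _ _ _ _))] with t ht
  have hzy : shiftedSlope φ x z y t = c * shiftedSlope φ x (c⁻¹ • z) (c⁻¹ • y) (c * t) := by
    rw [← shiftedSlope_smul, smul_inv_smul₀ hc.ne', smul_inv_smul₀ hc.ne']
  rw [hzy, ← mul_inv_cancel_left₀ hc.ne' a]
  exact mul_lt_mul_of_pos_left ht hc

theorem LipschitzWith.eventually_shiftedSlope_lt {L : NNReal} {φ : X → ℝ}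
    (hφ : LipschitzWith L φ) (x z y : X) {a : ℝ} (ha : Fsup φ x * ‖y‖ < a) :
    ∀ᶠ t in 𝓝[≠] 0, shiftedSlope φ x z y t < a := by
  rw [← nhdsLT_sup_nhdsGT, eventually_sup]
  refine ⟨?_, hφ.eventually_shiftedSlope_lt_nhdsGT x z y ha⟩
  have hneg := tendsto_neg_nhdsLT_neg.eventually
    (hφ.eventually_shiftedSlope_lt_nhdsGT x (-z - y) y ha)
  rw [neg_zero] at hneg
  filter_upwards [hneg] with t ht
  rwa [← shiftedSlope_neg, neg_neg] at ht

theorem LipschitzWith.eventually_lt_slope_of_directional_max {L : NNReal} {φ : X → ℝ}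
    (hφ : LipschitzWith L φ) {x y₀ : X} (hy₀ : ‖y₀‖ = 1) {fy₀ : X →L[ℝ] ℝ}
    (hnorm : GateauxDiffAt (fun y : X => ‖y‖) y₀ fy₀)
    (hdir : Tendsto (fun t : ℝ => (φ (x + t • y₀) - φ x) / t) (𝓝[≠] 0) (𝓝 (Fsup φ x)))
    (y : X) {a : ℝ} (ha : a < Fsup φ x * fy₀ y) :
    ∀ᶠ t in 𝓝[≠] 0, a < (φ (x + t • y) - φ x) / t := by
  set M := Fsup φ x
  set η := (M * fy₀ y - a) / 3 with hη_def
  have hη : 0 < η := by linarith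
  obtain ⟨s, hs, hnorm_s⟩ :
      ∃ s : ℝ, 0 < s ∧ M * ‖y₀ + s • -y‖ < M * ‖y₀‖ + s * (-(M * fy₀ y) + η) :=
    ((hnorm.const_mul M).eventually_lt (-y) (by simpa using hη)).and self_mem_nhdsWithin
      |>.exists.imp fun s hs => ⟨hs.2, hs.1⟩
  rw [show y₀ + s • -y = y₀ - s • y by module, hy₀, mul_one, mul_add, mul_neg] at hnorm_s
  have hdir_s : ∀ᶠ t in 𝓝[≠] 0, M - s * η < (φ (x + t • y₀) - φ x) / t :=
    hdir.eventually_const_lt (by linarith [mul_pos hs hη])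
  have hcross : ∀ᶠ t in 𝓝[≠] 0,
      shiftedSlope φ x (s • y) (y₀ - s • y) t < M * ‖y₀ - s • y‖ + s * η :=
    hφ.eventually_shiftedSlope_lt x _ _ (by linarith [mul_pos hs hη])
  refine eventually_nhdsNE_zero_of_mul_left hs.ne' ?_
  filter_upwards [hdir_s, hcross] with t hdir_t hcross_t
  -- `x + t • y₀` is reached from `x + (s * t) • y` by the step `t • (y₀ - s • y)`
  have hsplit : s * ((φ (x + (s * t) • y) - φ x) / (s * t))
      = (φ (x + t • y₀) - φ x) / t - shiftedSlope φ x (s • y) (y₀ - s • y) t := by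
    rw [shiftedSlope, show x + t • (s • y) + t • (y₀ - s • y) = x + t • y₀ by module,
      smul_smul, mul_comm t s]
    rcases eq_or_ne t 0 with rfl | ht
    · simp
    field_simp
    ring
  have hsa : s * a = s * (M * fy₀ y) - 3 * (s * η) := by rw [hη_def]; ring
  refine lt_of_mul_lt_mul_left ?_ hs.le
  linarith

end

theorem gateauxDiffAt_of_directional_max_general {X : Type*} [NormedAddCommGroup X]
    [NormedSpace ℝ X] (φ : X → ℝ) (hφ : ∃ L : NNReal, LipschitzWith L φ)
    (x y₀ : X) (hy₀ : ‖y₀‖ = 1) (fy₀ : X →L[ℝ] ℝ)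
    (hnorm : GateauxDiffAt (fun y : X => ‖y‖) y₀ fy₀)
    (hdir : Tendsto (fun t : ℝ => (φ (x + t • y₀) - φ x) / t) (𝓝[≠] 0) (𝓝 (Fsup φ x))) :
    ∃ A : X →L[ℝ] ℝ, GateauxDiffAt φ x A ∧ ∀ y : X, A y = Fsup φ x * fy₀ y := by
  obtain ⟨L, hL⟩ := hφ
  refine ⟨Fsup φ x • fy₀, gateauxDiffAt_of_forall_eventually_lt fun y a ha => ?_, fun y => rfl⟩
  exact hL.eventually_lt_slope_of_directional_max hy₀ hnorm hdir y ha

/-- If `φ : X → ℝ` is Lipschitz, `‖y₀‖ = 1`, the directional derivative of `φ` at `x` in the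
direction `y₀` exists and equals `F_φ(x)`, and the norm of `X` is Gateaux differentiable at
`y₀` with Gateaux derivative `fy₀`, then `φ` is Gateaux differentiable at `x` and
`⟨φ'(x), y⟩ = F_φ(x) · fy₀ y` for all `y`. -/
theorem gateauxDiffAt_of_directional_max {X : Type*} [NormedAddCommGroup X]
    [NormedSpace ℝ X] [CompleteSpace X] (φ : X → ℝ) (hφ : ∃ L : NNReal, LipschitzWith L φ)
    (x y₀ : X) (hy₀ : ‖y₀‖ = 1) (fy₀ : X →L[ℝ] ℝ)
    (hnorm : GateauxDiffAt (fun y : X => ‖y‖) y₀ fy₀)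
    (hdir : Tendsto (fun t : ℝ => (φ (x + t • y₀) - φ x) / t) (𝓝[≠] 0) (𝓝 (Fsup φ x))) :
    ∃ A : X →L[ℝ] ℝ, GateauxDiffAt φ x A ∧ ∀ y : X, A y = Fsup φ x * fy₀ y :=
  gateauxDiffAt_of_directional_max_general φ hφ x y₀ hy₀ fy₀ hnorm hdir
end

section
/- Let X be a real Banach space, let K ⊆ X be closed and nonempty, let x ∈ X \ K, and let x̄ ∈ K be a nearest point to x in K, i.e., ‖x − x̄‖ = d_K(x). Suppose the directional derivative lim_{t→0} (d_K(x + t(x − x̄)) − d_K(x))/t exists, and suppose the norm of X is Gateaux differentiable at x − x̄ with Gateaux derivative f_{x−x̄} ∈ X*. Then d_K is Gateaux differentiable at x and ⟨d_K'(x), y⟩ = f_{x−x̄}(y) for all y ∈ X. -/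
/-!
Write `u = x - xbar`. As `xbar` is a nearest point, `d_K` is affine with slope `‖u‖` on the segment
`[xbar, x]`, so the assumed derivative of `d_K` at `x` in direction `u` equals `‖u‖`. In any
direction `z`, the bound `d_K (x + t • z) ≤ ‖u + t • z‖` (equality at `t = 0`) controls the right
difference quotients from above by `f z`. From below, comparing `x + t • z` with `x + (t / s) • u`
through the `1`-Lipschitz property gives the lower limit `(‖u‖ - ‖u - s • z‖) / s`, which tends to
`f z` as `s ↓ 0`. Left quotients in direction `z` are right quotients in direction `-z`.
-/

open Filter Topology Metric

theorem Metric.infDist_eq_dist_of_dist_add_dist_eq {α : Type*} [PseudoMetricSpace α] {K : Set α}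
    {x y xbar : α} (hxbar : xbar ∈ K) (hnear : dist x xbar = infDist x K)
    (hy : dist x y + dist y xbar = dist x xbar) : infDist y K = dist y xbar := by
  have := infDist_le_infDist_add_dist (x := x) (y := y) (s := K)
  linarith [infDist_le_dist_of_mem (x := y) hxbar, dist_comm x y]

section DiffQuot

variable {X : Type*} [NormedAddCommGroup X] [NormedSpace ℝ X]

noncomputable def diffQuot (φ : X → ℝ) (x z : X) (t : ℝ) : ℝ := (φ (x + t • z) - φ x) / t

theorem diffQuot_neg_neg (φ : X → ℝ) (x z : X) (t : ℝ) :
    diffQuot φ x (-z) (-t) = -diffQuot φ x z t := by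
  simp only [diffQuot, smul_neg, neg_smul, neg_neg, div_neg]

theorem gateauxDiffAt_of_tendsto_diffQuot_nhdsGT {φ : X → ℝ} {x : X} {A : X →L[ℝ] ℝ}
    (h : ∀ z, Tendsto (diffQuot φ x z) (𝓝[>] 0) (𝓝 (A z))) : GateauxDiffAt φ x A := by
  intro z
  have hleft : Tendsto (diffQuot φ x z) (𝓝[<] 0) (𝓝 (A z)) := by
    have := ((h (-z)).comp (tendsto_neg_nhdsLT (a := (0 : ℝ)) |>.trans_eq (by simp))).neg
    simpa only [map_neg, neg_neg, Function.comp_def, diffQuot_neg_neg] using this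
  rw [← nhdsLT_sup_nhdsGT]
  exact hleft.sup (h z)

theorem LipschitzWith.diffQuot_rescale_le {φ : X → ℝ} (hφ : LipschitzWith 1 φ) (x u z : X)
    {s t : ℝ} (hs : 0 < s) (ht : 0 < t) :
    (diffQuot φ x u (t / s) - ‖u - s • z‖) / s ≤ diffQuot φ x z t := by
  set r := t / s
  have hlip := hφ.le_add_mul (x + r • u) (x + t • z)
  have hdist : dist (x + r • u) (x + t • z) = r * ‖u - s • z‖ := by
    rw [dist_add_left, dist_eq_norm, ← norm_smul_of_nonneg (by positivity), smul_sub, smul_smul,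
      div_mul_cancel₀ t hs.ne']
  have hlhs : (diffQuot φ x u r - ‖u - s • z‖) / s =
      (φ (x + r • u) - φ x - r * ‖u - s • z‖) / t := by
    simp only [diffQuot, r]
    field_simp
  rw [hlhs, diffQuot]
  refine div_le_div_of_nonneg_right ?_ ht.le
  simp only [NNReal.coe_one, one_mul, hdist] at hlip
  linarith

theorem LipschitzWith.eventually_lt_diffQuot {φ : X → ℝ} (hφ : LipschitzWith 1 φ) {x u : X}
    {a : ℝ} (hu : Tendsto (diffQuot φ x u) (𝓝[>] 0) (𝓝 a)) (z : X) {s b : ℝ} (hs : 0 < s)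
    (hb : b < (a - ‖u - s • z‖) / s) : ∀ᶠ t in 𝓝[>] 0, b < diffQuot φ x z t := by
  have hscale : Tendsto (fun t : ℝ => t / s) (𝓝[>] 0) (𝓝[>] 0) := by
    refine tendsto_nhdsWithin_of_tendsto_nhds_of_eventually_within _ ?_ ?_
    · simpa using (tendsto_id.div_const s).mono_left (nhdsWithin_le_nhds (a := (0 : ℝ)))
    · filter_upwards [self_mem_nhdsWithin] with t ht using div_pos ht hs
  have hlim := ((hu.comp hscale).sub_const ‖u - s • z‖).div_const s
  filter_upwards [hlim.eventually_const_lt hb, self_mem_nhdsWithin] with t hbt ht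
  exact hbt.trans_le (hφ.diffQuot_rescale_le x u z hs ht)

theorem tendsto_diffQuot_infDist_nhdsLT {K : Set X} {x xbar : X} (hxbar : xbar ∈ K)
    (hnear : ‖x - xbar‖ = infDist x K) :
    Tendsto (diffQuot (infDist · K) x (x - xbar)) (𝓝[<] 0) (𝓝 ‖x - xbar‖) := by
  refine tendsto_const_nhds.congr' ?_
  filter_upwards [Ioo_mem_nhdsLT (show (-1 : ℝ) < 0 by norm_num)] with t ⟨ht1, ht0⟩
  have h1 : x + t • (x - xbar) - xbar = (1 + t) • (x - xbar) := by module
  have h2 : x - (x + t • (x - xbar)) = (-t) • (x - xbar) := by module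
  have hy : dist x (x + t • (x - xbar)) + dist (x + t • (x - xbar)) xbar = dist x xbar := by
    simp only [dist_eq_norm, h1, h2, norm_smul_of_nonneg (by linarith : (0 : ℝ) ≤ 1 + t),
      norm_smul_of_nonneg (by linarith : (0 : ℝ) ≤ -t)]
    ring
  have hseg : infDist (x + t • (x - xbar)) K = (1 + t) * ‖x - xbar‖ := by
    rw [infDist_eq_dist_of_dist_add_dist_eq hxbar (by rwa [dist_eq_norm]) hy, dist_eq_norm, h1,
      norm_smul_of_nonneg (by linarith)]
  rw [diffQuot, hseg, ← hnear, eq_div_iff ht0.ne]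
  ring

theorem diffQuot_infDist_le_diffQuot_norm {K : Set X} {x xbar : X} (hxbar : xbar ∈ K)
    (hnear : ‖x - xbar‖ = infDist x K) (z : X) {t : ℝ} (ht : 0 < t) :
    diffQuot (infDist · K) x z t ≤ diffQuot (‖·‖) (x - xbar) z t := by
  simp only [diffQuot, ← hnear]
  gcongr
  simpa [dist_eq_norm, add_sub_right_comm] using infDist_le_dist_of_mem (x := x + t • z) hxbar

end DiffQuot

theorem distance_gateauxDiffAt_general {X : Type*} [NormedAddCommGroup X] [NormedSpace ℝ X]
    (K : Set X) (x : X) (xbar : X) (hxbar : xbar ∈ K)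
    (hnear : ‖x - xbar‖ = Metric.infDist x K)
    (hdir : ∃ L : ℝ, Tendsto
      (fun t : ℝ => (Metric.infDist (x + t • (x - xbar)) K - Metric.infDist x K) / t)
      (𝓝[≠] 0) (𝓝 L))
    (f : X →L[ℝ] ℝ) (hnorm : GateauxDiffAt (fun y : X => ‖y‖) (x - xbar) f) :
    GateauxDiffAt (fun y : X => Metric.infDist y K) x f := by
  obtain ⟨L, hL⟩ := hdir
  set u := x - xbar
  have hLu : L = ‖u‖ := tendsto_nhds_unique (hL.mono_left (nhdsLT_le_nhdsNE 0))
    (tendsto_diffQuot_infDist_nhdsLT hxbar hnear)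
  have hu : Tendsto (diffQuot (infDist · K) x u) (𝓝[>] 0) (𝓝 ‖u‖) :=
    hLu ▸ hL.mono_left (nhdsGT_le_nhdsNE 0)
  refine gateauxDiffAt_of_tendsto_diffQuot_nhdsGT fun z =>
    tendsto_order.2 ⟨fun b hb => ?_, fun b hb => ?_⟩
  · obtain ⟨s, hsb, hs⟩ := (((hnorm (-z)).mono_left (nhdsGT_le_nhdsNE 0)).eventually_lt_const
      (show f (-z) < -b by simpa using hb) |>.and self_mem_nhdsWithin).exists
    refine (lipschitz_infDist_pt K).eventually_lt_diffQuot hu z hs ?_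
    rw [lt_div_iff₀ hs]
    rw [div_lt_iff₀ hs] at hsb
    simp only [smul_neg, ← sub_eq_add_neg] at hsb
    linarith
  · filter_upwards [((hnorm z).mono_left (nhdsGT_le_nhdsNE 0)).eventually_lt_const hb,
      self_mem_nhdsWithin] with t hbt ht
    exact (diffQuot_infDist_le_diffQuot_norm hxbar hnear z ht).trans_lt hbt

/-- Let `K ⊆ X` be closed and nonempty, `x ∉ K`, and `x̄ ∈ K` a nearest point to `x` in `K`.
If the distance function `d_K` has a directional derivative at `x` in the direction
`x - x̄`, and the norm of `X` is Gateaux differentiable at `x - x̄` with Gateaux derivative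
`f`, then `d_K` is Gateaux differentiable at `x` with `⟨d_K'(x), y⟩ = f y` for all `y`. -/
theorem distance_gateauxDiffAt {X : Type*} [NormedAddCommGroup X] [NormedSpace ℝ X]
    [CompleteSpace X] (K : Set X) (hKc : IsClosed K) (hKne : K.Nonempty)
    (x : X) (hx : x ∉ K) (xbar : X) (hxbar : xbar ∈ K)
    (hnear : ‖x - xbar‖ = Metric.infDist x K)
    (hdir : ∃ L : ℝ, Tendsto
      (fun t : ℝ => (Metric.infDist (x + t • (x - xbar)) K - Metric.infDist x K) / t)
      (𝓝[≠] 0) (𝓝 L))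
    (f : X →L[ℝ] ℝ) (hnorm : GateauxDiffAt (fun y : X => ‖y‖) (x - xbar) f) :
    GateauxDiffAt (fun y : X => Metric.infDist y K) x f :=
  distance_gateauxDiffAt_general K x xbar hxbar hnear hdir f hnorm
end

section
/- Let X be a real Banach space whose dual space X* is strictly convex. Then every closed nonempty subset K of X satisfying limsup_{‖y‖→0} (d_K(x+y) − d_K(x))/‖y‖ = 1 for all x ∈ X \ K is convex. -/
/-!
Suppose `x = s • a + t • b ∉ K` with `a, b ∈ K`. Since the upper slope of `d_K` is `1` off `K`,
Ekeland's variational principle lets one move from any `w ∉ K` by at most `1` while increasing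
`d_K` by almost `1`. Iterating from `x` gives points `wₙ` with `‖wₙ₊₁ - wₙ‖ ≤ 1` and
`d_K(wₙ) > ρ₀ + n`, so the balls `B(wₙ, ρ₀ + n)` are nested and miss `K`; their union `C` is an
open convex set containing `x` and balls of unbounded radius at bounded distance from the origin.
If `f` and `g` separate `a` and `b` from `C`, evaluating `f + g` at the centres of these balls gives
`‖f + g‖ = ‖f‖ + ‖g‖`, so by strict convexity of `X*` they are positive multiples of each other.
Then `f` separates both `a` and `b` from `C ∋ x`, which is absurd.
-/

open Filter Topology Set Metric

theorem StrictConvexSpace.of_norm_add_lt {E : Type*} [NormedAddCommGroup E] [NormedSpace ℝ E]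
    (h : ∀ x y : E, ¬ (∃ c : ℝ, x = c • y ∨ y = c • x) → ‖x + y‖ < ‖x‖ + ‖y‖) :
    StrictConvexSpace ℝ E := by
  have key {x y : E} (hx : ‖x‖ = 1) (hy : ‖y‖ = 1) (hxy : ‖x + y‖ = 2) {c : ℝ} (hc : x = c • y) :
      x = y := by
    subst hc
    rw [norm_smul, hy, mul_one, Real.norm_eq_abs] at hx
    rw [← one_smul ℝ y, smul_smul, mul_one, ← add_smul, norm_smul, hy, mul_one,
      Real.norm_eq_abs] at hxy
    rcases abs_eq zero_le_one |>.1 hx with rfl | rfl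
    · exact one_smul ℝ y
    · norm_num at hxy
  refine StrictConvexSpace.of_norm_add_ne_two fun x y hx hy hne hxy => hne ?_
  obtain ⟨c, hc | hc⟩ := not_not.1 <| mt (h x y) (by rw [hx, hy, hxy]; norm_num)
  · exact key hx hy hxy hc
  · exact (key hy hx (by rwa [add_comm]) hc).symm

theorem exists_ekeland_seq {α : Type*} [PseudoMetricSpace α] {φ : α → ℝ}
    (hbdd : BddAbove (range φ)) {γ : ℝ} (hγ : 0 ≤ γ) (x : α) :
    ∃ (u : ℕ → α) (C : ℝ), u 0 = x ∧
      (∀ n m, n ≤ m → φ (u n) + γ * dist (u m) (u n) ≤ φ (u m)) ∧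
      ∀ n w, φ (u n) + γ * dist w (u n) ≤ φ w → φ w ≤ φ (u n) + C * (1 / 2) ^ n := by
  set S : α → Set α := fun z => {w | φ z + γ * dist w z ≤ φ w}
  set σ : α → ℝ := fun z => sSup (φ '' S z)
  have mem_self (z : α) : z ∈ S z := by simp [S]
  have mem_trans {z w v : α} (hw : w ∈ S z) (hv : v ∈ S w) : v ∈ S z := by
    simp only [S, mem_ofPred_eq] at *
    nlinarith [dist_triangle v w z]
  have le_σ {z w : α} (hw : w ∈ S z) : φ w ≤ σ z :=
    le_csSup (hbdd.mono (image_subset_range _ _)) (mem_image_of_mem _ hw)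
  have σ_mono {z w : α} (hw : w ∈ S z) : σ w ≤ σ z :=
    csSup_le ⟨φ w, mem_image_of_mem φ (mem_self w)⟩ <|
      forall_mem_image.2 fun _ hv => le_σ (mem_trans hw hv)
  have exists_next (z : α) : ∃ w ∈ S z, σ z - φ w ≤ (σ z - φ z) / 2 := by
    rcases (le_σ (mem_self z)).eq_or_lt with h | h
    · exact ⟨z, mem_self z, by rw [← h]; simp⟩
    · obtain ⟨_, ⟨w, hw, rfl⟩, hlt⟩ := exists_lt_of_lt_csSup
        ⟨φ z, mem_image_of_mem φ (mem_self z)⟩ (by linarith : (φ z + σ z) / 2 < σ z)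
      exact ⟨w, hw, by linarith⟩
  choose next next_mem next_gap using exists_next
  set u : ℕ → α := fun n => next^[n] x
  have u_succ (n : ℕ) : u (n + 1) = next (u n) := Function.iterate_succ_apply' next n x
  have gap (n : ℕ) : σ (u n) - φ (u n) ≤ (σ x - φ x) * (1 / 2) ^ n := by
    induction n with
    | zero => simp [u]
    | succ n ih =>
      rw [u_succ, pow_succ]
      nlinarith [σ_mono (next_mem (u n)), next_gap (u n)]
  have u_mem {n m : ℕ} (hnm : n ≤ m) : u m ∈ S (u n) := by
    induction m, hnm using Nat.le_induction with
    | base => exact mem_self _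
    | succ m _ ih => rw [u_succ]; exact mem_trans ih (next_mem _)
  exact ⟨u, σ x - φ x, rfl, fun n m => u_mem, fun n w hw => by linarith [le_σ hw, gap n]⟩

theorem Continuous.exists_ekeland {α : Type*} [MetricSpace α] [CompleteSpace α] {φ : α → ℝ}
    (hφ : Continuous φ) (hbdd : BddAbove (range φ)) {γ : ℝ} (hγ : 0 < γ) (x : α) :
    ∃ z, φ x + γ * dist z x ≤ φ z ∧ ∀ w, φ z + γ * dist w z ≤ φ w → w = z := by
  obtain ⟨u, C, rfl, hmono, hsup⟩ := exists_ekeland_seq hbdd hγ.le x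
  have hu : CauchySeq u := by
    refine cauchySeq_of_le_geometric (1 / 2) (C / γ) (by norm_num) fun n => ?_
    have h := hmono n (n + 1) n.le_succ
    rw [dist_comm, div_mul_eq_mul_div, le_div_iff₀ hγ]
    linarith [hsup n _ h]
  obtain ⟨z, hz⟩ := cauchySeq_tendsto_of_complete hu
  have hzu (n : ℕ) : φ (u n) + γ * dist z (u n) ≤ φ z :=
    (isClosed_le (f := fun v => φ (u n) + γ * dist v (u n)) (by fun_prop) hφ).mem_of_tendsto hz
      ((eventually_ge_atTop n).mono fun m hm => hmono n m hm)
  refine ⟨z, hzu 0, fun w hw => ?_⟩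
  have hlim : Tendsto (fun n : ℕ => φ z + C * (1 / 2 : ℝ) ^ n) atTop (𝓝 (φ z)) := by
    simpa using ((tendsto_pow_atTop_nhds_zero_of_lt_one (by norm_num)
      (by norm_num : (1 / 2 : ℝ) < 1)).const_mul C).const_add (φ z)
  have hwz : φ w ≤ φ z := ge_of_tendsto' hlim fun n => by
    have := hsup n w (by nlinarith [dist_triangle w z (u n), hzu n])
    nlinarith [hzu n, dist_nonneg (x := z) (y := u n)]
  exact dist_le_zero.1 (by nlinarith [dist_nonneg (x := w) (y := z)])

section

variable {X : Type*} [NormedAddCommGroup X]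

theorem LipschitzWith.exists_dist_le_add_mul_le [CompleteSpace X] {f : X → ℝ} {L : NNReal}
    (hf : LipschitzWith L f) {γ : ℝ} (hγ : 0 < γ) {x : X} {R : ℝ} (hR : 0 ≤ R)
    (hloc : ∀ z ∈ ball x R, f x ≤ f z → ∃ᶠ y in 𝓝[≠] 0, f z + γ * ‖y‖ ≤ f (z + y)) :
    ∃ z, dist z x ≤ R ∧ f x + γ * R ≤ f z := by
  have : CompleteSpace (closedBall x R) := isClosed_closedBall.completeSpace_coe
  have hbdd : BddAbove (range fun z : closedBall x R => f z) := by
    refine ⟨f x + L * R, forall_mem_range.2 fun z => ?_⟩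
    have h₁ := hf.dist_le_mul z x
    have h₂ := mem_closedBall.1 z.2
    rw [Real.dist_eq] at h₁
    nlinarith [le_abs_self (f z - f x), L.2]
  obtain ⟨z, hxz, hmax⟩ := (hf.continuous.comp continuous_subtype_val).exists_ekeland hbdd hγ
    ⟨x, mem_closedBall_self hR⟩
  simp only [Function.comp_apply, Subtype.dist_eq] at hxz hmax
  refine ⟨z, z.2, ?_⟩
  rcases (mem_closedBall.1 z.2).lt_or_eq with hlt | heq
  · exfalso
    have hz : Tendsto (fun y => (z : X) + y) (𝓝 0) (𝓝 z) := by
      simpa using (continuous_const_add (z : X)).tendsto 0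
    have hnear : ∀ᶠ y in 𝓝[≠] (0 : X), (z : X) + y ∈ ball x R ∧ y ≠ 0 :=
      ((hz.eventually (isOpen_ball.mem_nhds hlt)).filter_mono nhdsWithin_le_nhds).and
        self_mem_nhdsWithin
    have hfz : f x ≤ f z := by nlinarith [dist_nonneg (x := (z : X)) (y := x)]
    obtain ⟨y, hy, hyB, hy0⟩ := ((hloc z hlt hfz).and_eventually hnear).exists
    have := hmax ⟨z + y, ball_subset_closedBall hyB⟩ (by simpa using hy)
    exact hy0 (by simpa [Subtype.ext_iff] using this)
  · rwa [heq] at hxz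

def ContainsLargeBalls (C : Set X) : Prop :=
  ∃ M, ∀ R, ∃ w ρ, R ≤ ρ ∧ ‖w‖ ≤ ρ + M ∧ ball w ρ ⊆ C

variable [NormedSpace ℝ X]

theorem LipschitzWith.frequently_add_mul_norm_le [Nontrivial X] {f : X → ℝ} {L : NNReal}
    (hf : LipschitzWith L f) {z : X} {γ : ℝ}
    (hγ : γ < limsup (fun y => (f (z + y) - f z) / ‖y‖) (𝓝[≠] 0)) :
    ∃ᶠ y in 𝓝[≠] 0, f z + γ * ‖y‖ ≤ f (z + y) := by
  have slope_ge : ∀ᶠ y in 𝓝[≠] (0 : X), -(L : ℝ) ≤ (f (z + y) - f z) / ‖y‖ := by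
    filter_upwards [self_mem_nhdsWithin] with y hy
    have := hf.dist_le_mul z (z + y)
    rw [dist_self_add_right, Real.dist_eq, abs_sub_comm] at this
    rw [le_div_iff₀ (norm_pos_iff.2 hy)]
    linarith [neg_abs_le (f (z + y) - f z)]
  refine (frequently_lt_of_lt_limsup (IsBoundedUnder.isCoboundedUnder_le ⟨_, slope_ge⟩) hγ).mp ?_
  filter_upwards [self_mem_nhdsWithin] with y hy hlt
  rw [lt_div_iff₀ (norm_pos_iff.2 hy)] at hlt
  linarith

theorem ContinuousLinearMap.apply_add_mul_norm_le {φ : X →L[ℝ] ℝ} {c : X} {r M : ℝ} (hr : 0 < r)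
    (h : ∀ u ∈ ball c r, φ u ≤ M) : φ c + r * ‖φ‖ ≤ M := by
  have h' : ∀ u ∈ closedBall c r, φ u ≤ M := by
    rw [← closure_ball c hr.ne']
    exact fun u hu => closure_minimal h (isClosed_le φ.continuous continuous_const) hu
  have hbound : ∀ z ∈ closedBall (0 : X) r, ‖φ z‖ ≤ M - φ c := by
    intro z hz
    rw [mem_closedBall_zero_iff] at hz
    have h₁ := h' (c + z) (by simpa using hz)
    have h₂ := h' (c - z) (by simpa using hz)
    rw [map_add] at h₁
    rw [map_sub] at h₂
    rw [Real.norm_eq_abs, abs_le]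
    constructor <;> linarith
  have := φ.opNorm_bound_of_ball_bound hr _ hbound
  rw [le_div_iff₀ hr] at this
  linarith

theorem ContainsLargeBalls.norm_add_norm_le {C : Set X} (hC : ContainsLargeBalls C)
    {f g : X →L[ℝ] ℝ} (hf : BddAbove (f '' C)) (hg : BddAbove (g '' C)) :
    ‖f‖ + ‖g‖ ≤ ‖f + g‖ := by
  obtain ⟨M, hM⟩ := hC
  obtain ⟨α, hα⟩ := hf
  obtain ⟨β, hβ⟩ := hg
  rw [mem_upperBounds, forall_mem_image] at hα hβ
  by_contra! hlt
  set δ := ‖f‖ + ‖g‖ - ‖f + g‖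
  obtain ⟨w, ρ, hRρ, hw, hball⟩ := hM (max 1 ((α + β + M * ‖f + g‖) / δ + 1))
  have hρ : 0 < ρ := lt_of_lt_of_le one_pos (le_of_max_le_left hRρ)
  have hfw := f.apply_add_mul_norm_le hρ fun u hu => hα (hball hu)
  have hgw := g.apply_add_mul_norm_le hρ fun u hu => hβ (hball hu)
  have hfg : -(f + g) w ≤ ‖f + g‖ * (ρ + M) := by
    calc -(f + g) w ≤ ‖(f + g) w‖ := neg_le_abs _
      _ ≤ ‖f + g‖ * ‖w‖ := (f + g).le_opNorm w
      _ ≤ ‖f + g‖ * (ρ + M) := by gcongr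
  have hδ : 0 < δ := by simp only [δ]; linarith
  have : (α + β + M * ‖f + g‖) / δ < ρ := by linarith [le_of_max_le_right hRρ]
  rw [div_lt_iff₀ hδ] at this
  simp only [add_apply] at hfg
  nlinarith

theorem Convex.convex_compl_of_containsLargeBalls [StrictConvexSpace ℝ (X →L[ℝ] ℝ)] {C : Set X}
    (hconv : Convex ℝ C) (hopen : IsOpen C) (hC : ContainsLargeBalls C) : Convex ℝ Cᶜ := by
  intro a ha b hb s t hs ht hst hx
  obtain ⟨f, hf⟩ := geometric_hahn_banach_open_point hconv hopen ha
  obtain ⟨g, hg⟩ := geometric_hahn_banach_open_point hconv hopen hb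
  have bdd {φ : X →L[ℝ] ℝ} {p : X} (hφ : ∀ u ∈ C, φ u < φ p) : BddAbove (φ '' C) :=
    ⟨φ p, forall_mem_image.2 fun u hu => (hφ u hu).le⟩
  have ne_zero {φ : X →L[ℝ] ℝ} {p : X} (hφ : ∀ u ∈ C, φ u < φ p) : φ ≠ 0 := by
    rintro rfl
    simpa using hφ _ hx
  have hray : SameRay ℝ f g := sameRay_iff_norm_add.2 <|
    le_antisymm (norm_add_le f g) (hC.norm_add_norm_le (bdd hf) (bdd hg))
  obtain ⟨r, hr, rfl⟩ := hray.exists_pos_left (ne_zero hf) (ne_zero hg)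
  have hfb : f (s • a + t • b) < f b := by
    simpa [hr] using hg _ hx
  exact lt_irrefl (f (s • a + t • b))
    (convex_halfSpace_gt f.toLinearMap.isLinear _ (hf _ hx) hfb hs ht hst)

theorem exists_dist_le_one_lt_infDist [CompleteSpace X] [Nontrivial X] {K : Set X}
    (hK : ∀ x ∉ K, 1 ≤ limsup (fun y => (infDist (x + y) K - infDist x K) / ‖y‖) (𝓝[≠] 0))
    {w : X} {ρ : ℝ} (hρ : 0 ≤ ρ) (hw : ρ < infDist w K) :
    ∃ w', dist w' w ≤ 1 ∧ ρ + 1 < infDist w' K := by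
  set γ := max (1 - (infDist w K - ρ) / 2) (1 / 2)
  have hγ : 0 < γ := one_half_pos.trans_le (le_max_right _ _)
  have hγ₁ : γ < 1 := max_lt (by linarith) (by norm_num)
  obtain ⟨w', hw', hinc⟩ := (lipschitz_infDist_pt K).exists_dist_le_add_mul_le hγ zero_le_one
    fun z _ hz => (lipschitz_infDist_pt K).frequently_add_mul_norm_le <| hγ₁.trans_le <|
      hK z fun hzK => by linarith [infDist_zero_of_mem hzK]
  exact ⟨w', hw', by linarith [le_max_left (1 - (infDist w K - ρ) / 2) (1 / 2)]⟩

theorem exists_convex_isOpen_containsLargeBalls_subset_compl [CompleteSpace X] [Nontrivial X]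
    {K : Set X}
    (hK : ∀ x ∉ K, 1 ≤ limsup (fun y => (infDist (x + y) K - infDist x K) / ‖y‖) (𝓝[≠] 0))
    {x : X} (hx : 0 < infDist x K) :
    ∃ C : Set X, Convex ℝ C ∧ IsOpen C ∧ ContainsLargeBalls C ∧ x ∈ C ∧ C ⊆ Kᶜ := by
  set ρ₀ := infDist x K / 2
  have hρ₀ : 0 < ρ₀ := half_pos hx
  have step (n : ℕ) (w : X) :
      ∃ w', ρ₀ + n < infDist w K → dist w' w ≤ 1 ∧ ρ₀ + ↑(n + 1) < infDist w' K := by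
    by_cases hw : ρ₀ + n < infDist w K
    · obtain ⟨w', h⟩ := exists_dist_le_one_lt_infDist hK (by positivity) hw
      exact ⟨w', fun _ => by push_cast; rwa [← add_assoc]⟩
    · exact ⟨w, fun h => absurd h hw⟩
  choose next hnext using step
  let w : ℕ → X := fun n => Nat.rec x next n
  have hw (n : ℕ) : ρ₀ + n < infDist (w n) K ∧ dist (w n) x ≤ n := by
    induction n with
    | zero => simpa [w, ρ₀] using hx
    | succ n ih =>
      obtain ⟨h₁, h₂⟩ := hnext n (w n) ih.1
      refine ⟨h₂, ?_⟩
      push_cast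
      linarith [dist_triangle (w (n + 1)) (w n) x]
  have hmono : Monotone fun n => ball (w n) (ρ₀ + n) :=
    monotone_nat_of_le_succ fun n => ball_subset_ball' <| by
      push_cast
      linarith [dist_comm (w n) (w (n + 1)), (hnext n (w n) (hw n).1).1]
  refine ⟨⋃ n, ball (w n) (ρ₀ + n), hmono.directed_le.convex_iUnion fun _ => convex_ball _ _,
    isOpen_iUnion fun _ => isOpen_ball, ⟨‖x‖ - ρ₀, fun R => ?_⟩,
    mem_iUnion.2 ⟨0, by simpa [w] using hρ₀⟩,
    iUnion_subset fun n => (ball_subset_ball (hw n).1.le).trans ball_infDist_subset_compl⟩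
  obtain ⟨n, hn⟩ := exists_nat_ge R
  refine ⟨w n, ρ₀ + n, by linarith, ?_, subset_iUnion (fun n => ball (w n) (ρ₀ + n)) n⟩
  linarith [norm_le_norm_add_norm_sub' (w n) x, dist_eq_norm (w n) x, (hw n).2]

end

/-- If the dual space `X*` of a real Banach space `X` is strictly convex (i.e.
`‖f + g‖ < ‖f‖ + ‖g‖` whenever the functionals `f` and `g` are not multiples of
one another), then every closed nonempty subset `K` of `X` satisfying
`limsup_{‖y‖→0} (d_K(x+y) - d_K(x))/‖y‖ = 1` for all `x ∈ X \ K` is convex. -/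
theorem convex_of_limsup_eq_one {X : Type*} [NormedAddCommGroup X] [NormedSpace ℝ X]
    [CompleteSpace X]
    (hsc : ∀ f g : X →L[ℝ] ℝ, ¬ (∃ c : ℝ, f = c • g ∨ g = c • f) → ‖f + g‖ < ‖f‖ + ‖g‖)
    (K : Set X) (hKc : IsClosed K) (hKne : K.Nonempty)
    (hK : ∀ x ∉ K, limsup
      (fun y : X => (Metric.infDist (x + y) K - Metric.infDist x K) / ‖y‖)
      (𝓝[≠] (0 : X)) = 1) :
    Convex ℝ K := by
  intro a ha b hb s t hs ht hst
  by_contra hx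
  have : Nontrivial X := nontrivial_of_ne a (s • a + t • b) fun h => hx (h ▸ ha)
  have : StrictConvexSpace ℝ (X →L[ℝ] ℝ) := .of_norm_add_lt hsc
  obtain ⟨C, hconv, hopen, hC, hxC, hCK⟩ := exists_convex_isOpen_containsLargeBalls_subset_compl
    (fun z hz => (hK z hz).ge) ((hKc.notMem_iff_infDist_pos hKne).1 hx)
  exact hconv.convex_compl_of_containsLargeBalls hopen hC (fun h => hCK h ha)
    (fun h => hCK h hb) hs ht hst hxC
end

section
/- Let X be a real Banach space, let K ⊆ X be a Čebyšev set, let x ∈ X \ K, and let x̄ ∈ K be the unique nearest point to x in K. If d_K is Gateaux differentiable at x, then for z = (x − x̄)/‖x − x̄‖ one has ‖z‖ = 1 and lim_{t→0⁺} (d_K(x+tz) − d_K(x))/t = 1. -/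
open Filter Topology

/-- If `K` is a Čebyšev set in a real Banach space `X`, `x ∉ K`, `x̄` is the unique nearest
point to `x` in `K`, and `d_K` is Gateaux differentiable at `x`, then for
`z = (x - x̄)/‖x - x̄‖` one has `‖z‖ = 1` and
`lim_{t→0⁺} (d_K(x+tz) - d_K(x))/t = 1`. -/
theorem chebyshev_directional_deriv_one {X : Type*} [NormedAddCommGroup X]
    [NormedSpace ℝ X] [CompleteSpace X] (K : Set X)
    (hcheb : ∀ y : X, ∃! v : X, v ∈ K ∧ ‖y - v‖ = Metric.infDist y K)
    (x : X) (hx : x ∉ K) (xbar : X) (hxbar : xbar ∈ K)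
    (hnear : ‖x - xbar‖ = Metric.infDist x K)
    (hdiff : ∃ A : X →L[ℝ] ℝ, GateauxDiffAt (fun y : X => Metric.infDist y K) x A) :
    ‖(‖x - xbar‖)⁻¹ • (x - xbar)‖ = 1 ∧
      Tendsto (fun t : ℝ =>
          (Metric.infDist (x + t • ((‖x - xbar‖)⁻¹ • (x - xbar))) K - Metric.infDist x K) / t)
        (𝓝[>] 0) (𝓝 1) := by
  obtain ⟨A, hA⟩ := hdiff
  set d : ℝ := ‖x - xbar‖ with hd
  have hsub : x - xbar ≠ 0 := by
    intro h
    exact hx (by simpa [sub_eq_zero.mp h] using hxbar)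
  have hdpos : 0 < d := norm_pos_iff.mpr hsub
  set z : X := d⁻¹ • (x - xbar) with hz
  have hznorm : ‖z‖ = 1 := by
    rw [hz, norm_smul, norm_inv, norm_norm, ← hd, inv_mul_cancel₀ hdpos.ne']
  refine ⟨hznorm, ?_⟩
  have hK : K.Nonempty := ⟨xbar, hxbar⟩
  -- for t ∈ (-d, 0), the distance is exactly d + t
  have key : ∀ t : ℝ, -d < t → t < 0 →
      Metric.infDist (x + t • z) K = d + t := by
    intro t ht1 ht2
    have hxz : x + t • z - xbar = (1 + t / d) • (x - xbar) := by
      rw [hz, smul_smul]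
      rw [add_smul, one_smul]
      ring_nf
      rw [mul_comm t d⁻¹]
      abel
    have hfac : 0 < 1 + t / d := by
      have : -1 < t / d := by
        rw [neg_lt, ← neg_div]
        exact (div_lt_one hdpos).mpr (by linarith)
      linarith
    have hnorm : ‖x + t • z - xbar‖ = d + t := by
      rw [hxz, norm_smul, Real.norm_eq_abs, abs_of_pos hfac, ← hd]
      field_simp
    have hub : Metric.infDist (x + t • z) K ≤ d + t := by
      calc Metric.infDist (x + t • z) K ≤ dist (x + t • z) xbar :=
            Metric.infDist_le_dist_of_mem hxbar
        _ = d + t := by rw [dist_eq_norm]; exact hnorm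
    have hlb : d + t ≤ Metric.infDist (x + t • z) K := by
      have h1 : Metric.infDist x K ≤ Metric.infDist (x + t • z) K + dist x (x + t • z) :=
        Metric.infDist_le_infDist_add_dist
      have h2 : dist x (x + t • z) = -t := by
        rw [dist_eq_norm]
        simp [norm_smul, hznorm, abs_of_neg ht2]
      rw [← hnear, h2] at h1
      linarith
    linarith
  -- the difference quotient is eventually 1 on 𝓝[<] 0
  have hleft : Tendsto (fun t : ℝ =>
      (Metric.infDist (x + t • z) K - Metric.infDist x K) / t) (𝓝[<] 0) (𝓝 1) := by
    have hev : ∀ᶠ t in 𝓝[<] (0:ℝ),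
        (Metric.infDist (x + t • z) K - Metric.infDist x K) / t = 1 := by
      filter_upwards [Ioo_mem_nhdsLT_of_mem (by constructor <;> [linarith; rfl] :
        (0:ℝ) ∈ Set.Ioc (-d) 0)] with t ht
      rw [key t ht.1 ht.2, ← hnear]
      simp only [add_sub_cancel_left]
      exact div_self (ne_of_lt ht.2)
    exact tendsto_const_nhds.congr' (hev.mono fun _ h => h.symm)
  have hAz : A z = 1 := by
    have h1 : Tendsto (fun t : ℝ =>
        (Metric.infDist (x + t • z) K - Metric.infDist x K) / t) (𝓝[<] 0) (𝓝 (A z)) :=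
      (hA z).mono_left (nhdsWithin_mono _ (fun t ht => ne_of_lt ht))
    exact tendsto_nhds_unique h1 hleft
  have := (hA z).mono_left (nhdsWithin_mono _ (fun t (ht : t ∈ Set.Ioi 0) => ne_of_gt ht))
  rwa [hAz] at this
end

section
/- Let X be a finite-dimensional real normed space that is smooth, i.e., for every nonzero x ∈ X there exists a unique f ∈ X* with ‖f‖ = 1 and f(x) = ‖x‖. Then every Čebyšev set in X is convex. -/
/-!
In finite dimensions the metric projection `P` onto a Čebyšev set `K` is continuous, and in a
smooth space so is the norming functional `J` at every nonzero point. Hence moving from `z ∉ K`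
in the direction of `z - P z` increases `d_K` at rate arbitrarily close to `1`, and a
continuous-induction argument gives, for every `R ≥ 0`, a point `y` within `R` of `x` with
`d_K y = d_K x + R`. The directions of `y - P x` accumulate at a unit vector `E` such that no
point of `K` lies in an open ball of radius `μ` around `P x + μ • E`. By Hahn–Banach and
smoothness, `J E` is then nonpositive on `K - P x`, while `J E (x - P x) ≥ d_K x > 0`; so every
point outside `K` is strictly separated from `K` by a closed half-space.
-/

open Filter Topology Metric Set

theorem continuousAt_of_isClosed_of_isCompact {α β : Type*} [TopologicalSpace α]
    [TopologicalSpace β] {f : α → β} {x : α} {F : Set (α × β)} (hF : IsClosed F)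
    (hfF : ∀ᶠ a in 𝓝 x, (a, f a) ∈ F) (hFx : ∀ b, (x, b) ∈ F → b = f x) {C : Set β}
    (hC : IsCompact C) (hfC : ∀ᶠ a in 𝓝 x, f a ∈ C) : ContinuousAt f x := by
  rw [ContinuousAt, tendsto_iff_ultrafilter]
  intro U hU
  obtain ⟨b, -, hb⟩ := hC.ultrafilter_le_nhds (U.map f)
    (by rw [Ultrafilter.coe_map, le_principal_iff]; exact hU hfC)
  have hxb : (x, b) ∈ F := hF.mem_of_tendsto (tendsto_id'.2 hU |>.prodMk_nhds hb) (hU hfF)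
  rwa [← hFx b hxb]

theorem convex_of_forall_notMem_exists_le_lt {𝕜 E : Type*} [Field 𝕜] [LinearOrder 𝕜]
    [IsStrictOrderedRing 𝕜] [AddCommGroup E] [Module 𝕜 E] {s : Set E}
    (h : ∀ x ∉ s, ∃ (f : E →ₗ[𝕜] 𝕜) (c : 𝕜), (∀ w ∈ s, f w ≤ c) ∧ c < f x) :
    Convex 𝕜 s := by
  intro a ha b hb t₁ t₂ ht₁ ht₂ ht
  by_contra hm
  obtain ⟨f, c, hfs, hc⟩ := h _ hm
  have : f (t₁ • a + t₂ • b) ≤ c := calc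
    f (t₁ • a + t₂ • b) = t₁ * f a + t₂ * f b := by simp
    _ ≤ t₁ * c + t₂ * c := by gcongr <;> exact hfs _ ‹_›
    _ = c := by rw [← add_mul, ht, one_mul]
  exact this.not_gt hc

section NormedSpace

variable {X : Type*} [NormedAddCommGroup X] [NormedSpace ℝ X]

theorem exists_dual_vector_nonneg_of_norm_le_norm_add_smul {e z : X} (he : ‖e‖ = 1)
    (h : ∀ t : ℝ, 0 ≤ t → 1 ≤ ‖e + t • z‖) :
    ∃ g : X →L[ℝ] ℝ, ‖g‖ = 1 ∧ g e = 1 ∧ 0 ≤ g z := by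
  have hray : Convex ℝ ((fun t : ℝ => e + t • z) '' Ici 0) := by
    rintro _ ⟨s, hs : 0 ≤ s, rfl⟩ _ ⟨t, ht : 0 ≤ t, rfl⟩ a b ha hb hab
    refine ⟨a * s + b * t, mem_Ici.2 (by positivity), ?_⟩
    linear_combination (norm := module) (-hab) • e
  have hdisj : Disjoint (ball (0 : X) 1) ((fun t : ℝ => e + t • z) '' Ici 0) := by
    rw [Set.disjoint_right]
    rintro _ ⟨t, ht, rfl⟩
    simpa using h t ht
  obtain ⟨f, u, hfu, huf⟩ := geometric_hahn_banach_open (convex_ball 0 1) isOpen_ball hray hdisj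
  have hfe : u ≤ f e := by simpa using huf e ⟨0, self_mem_Ici, by simp⟩
  have hfz : u ≤ f e + f z := by simpa using huf (e + z) ⟨1, mem_Ici.2 zero_le_one, by simp⟩
  have hu : 0 < u := by simpa using hfu 0 (mem_ball_self one_pos)
  have hf : ‖f‖ ≤ u := by
    refine not_lt.1 fun hlt => ?_
    obtain ⟨x, hx, hux⟩ := f.exists_lt_apply_of_lt_opNorm hlt
    have h1 := hfu x (mem_ball_zero_iff.2 hx)
    have h2 := hfu (-x) (by simpa using hx)
    rw [Real.norm_eq_abs, lt_abs] at hux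
    rw [map_neg] at h2
    rcases hux with hux | hux <;> linarith
  have hfe' : f e ≤ ‖f‖ := (le_abs_self _).trans (by simpa [he] using f.le_opNorm e)
  refine ⟨‖f‖⁻¹ • f, ?_, ?_, ?_⟩
  · rw [norm_smul, norm_inv, norm_norm, inv_mul_cancel₀ (by linarith)]
  · simp [show f e = ‖f‖ by linarith, inv_mul_cancel₀ (show ‖f‖ ≠ 0 by linarith)]
  · show 0 ≤ ‖f‖⁻¹ * f z
    exact mul_nonneg (inv_nonneg.2 (norm_nonneg f)) (by linarith)

theorem one_le_norm_add_smul_of_le_norm_smul_add {e q : X} {μ t : ℝ} (he : ‖e‖ = 1)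
    (hμ : μ ≤ ‖μ • e + q‖) (ht : 0 ≤ t) (htμ : 1 ≤ t * μ) : 1 ≤ ‖e + t • q‖ :=
  calc 1 = t * μ - (t * μ - 1) := by ring
    _ ≤ ‖t • (μ • e + q)‖ - ‖(t * μ - 1) • e‖ := by
      rw [norm_smul, norm_smul, he, Real.norm_of_nonneg ht, Real.norm_of_nonneg (by linarith)]
      nlinarith
    _ ≤ ‖t • (μ • e + q) - (t * μ - 1) • e‖ := norm_sub_norm_le _ _
    _ = ‖e + t • q‖ := by congr 1; module

noncomputable def normingFunctional (x : X) : X →L[ℝ] ℝ := (exists_dual_vector'' ℝ x).choose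

theorem norm_normingFunctional_le (x : X) : ‖normingFunctional x‖ ≤ 1 :=
  (exists_dual_vector'' ℝ x).choose_spec.1

@[simp]
theorem normingFunctional_apply_self (x : X) : normingFunctional x x = ‖x‖ :=
  (exists_dual_vector'' ℝ x).choose_spec.2

theorem normingFunctional_apply_le (x y : X) : normingFunctional x y ≤ ‖y‖ :=
  (le_abs_self _).trans <| ((normingFunctional x).le_opNorm y).trans <|
    mul_le_of_le_one_left (norm_nonneg y) (norm_normingFunctional_le x)

theorem norm_eq_one_of_apply_eq_norm {x : X} (hx : x ≠ 0) {g : X →L[ℝ] ℝ} (hg : ‖g‖ ≤ 1)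
    (hgx : g x = ‖x‖) : ‖g‖ = 1 := by
  refine le_antisymm hg (le_of_mul_le_mul_right ?_ (norm_pos_iff.2 hx))
  simpa [hgx] using (le_abs_self (g x)).trans (g.le_opNorm x)

theorem eq_normingFunctional {x : X} (hx : x ≠ 0) (hu : ∃! f : X →L[ℝ] ℝ, ‖f‖ = 1 ∧ f x = ‖x‖)
    {g : X →L[ℝ] ℝ} (hg : ‖g‖ ≤ 1) (hgx : g x = ‖x‖) : g = normingFunctional x :=
  hu.unique ⟨norm_eq_one_of_apply_eq_norm hx hg hgx, hgx⟩
    ⟨norm_eq_one_of_apply_eq_norm hx (norm_normingFunctional_le x)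
      (normingFunctional_apply_self x), normingFunctional_apply_self x⟩

theorem continuousAt_normingFunctional [FiniteDimensional ℝ X] {x : X} (hx : x ≠ 0)
    (hu : ∃! f : X →L[ℝ] ℝ, ‖f‖ = 1 ∧ f x = ‖x‖) : ContinuousAt normingFunctional x :=
  continuousAt_of_isClosed_of_isCompact (F := {p | ‖p.2‖ ≤ 1 ∧ p.2 p.1 = ‖p.1‖})
    ((isClosed_le continuous_snd.norm continuous_const).inter
      (isClosed_eq (isBoundedBilinearMap_apply.continuous.comp continuous_swap)
        continuous_fst.norm))
    (Eventually.of_forall fun a => ⟨norm_normingFunctional_le a, normingFunctional_apply_self a⟩)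
    (fun _ hg => eq_normingFunctional hx hu hg.1 hg.2) (isCompact_closedBall 0 1)
    (Eventually.of_forall fun a => mem_closedBall_zero_iff.2 (norm_normingFunctional_le a))

end NormedSpace

section Chebyshev

variable {α : Type*} [MetricSpace α]

def IsChebyshev (K : Set α) : Prop :=
  ∀ x, ∃! v, v ∈ K ∧ dist x v = infDist x K

namespace IsChebyshev

variable {K : Set α}

noncomputable def proj (hK : IsChebyshev K) (x : α) : α := (hK x).exists.choose

theorem proj_mem (hK : IsChebyshev K) (x : α) : hK.proj x ∈ K := (hK x).exists.choose_spec.1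

theorem dist_proj (hK : IsChebyshev K) (x : α) : dist x (hK.proj x) = infDist x K :=
  (hK x).exists.choose_spec.2

theorem eq_proj (hK : IsChebyshev K) {x v : α} (hv : v ∈ K) (hxv : dist x v = infDist x K) :
    v = hK.proj x :=
  (hK x).unique ⟨hv, hxv⟩ ⟨hK.proj_mem x, hK.dist_proj x⟩

theorem isClosed (hK : IsChebyshev K) : IsClosed K := by
  refine isClosed_of_closure_subset fun x hx => ?_
  have : dist x (hK.proj x) = 0 := by rw [hK.dist_proj, infDist_zero_of_mem_closure hx]
  exact dist_eq_zero.1 this ▸ hK.proj_mem x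

theorem continuous_proj [ProperSpace α] (hK : IsChebyshev K) : Continuous hK.proj := by
  refine continuous_iff_continuousAt.2 fun x => continuousAt_of_isClosed_of_isCompact
    (F := {p | p.2 ∈ K ∧ dist p.1 p.2 = infDist p.1 K}) ?_
    (Eventually.of_forall fun a => ⟨hK.proj_mem a, hK.dist_proj a⟩)
    (fun v hv => hK.eq_proj hv.1 hv.2) (isCompact_closedBall x (infDist x K + 2)) ?_
  · exact (hK.isClosed.preimage continuous_snd).inter
      (isClosed_eq continuous_dist ((continuous_infDist_pt K).comp continuous_fst))
  · filter_upwards [ball_mem_nhds x one_pos] with a ha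
    rw [mem_ball] at ha
    rw [mem_closedBall]
    calc dist (hK.proj a) x ≤ dist a (hK.proj a) + dist a x := dist_triangle_left _ _ _
      _ ≤ (infDist x K + dist a x) + dist a x := by
        rw [hK.dist_proj]; gcongr; exact infDist_le_infDist_add_dist
      _ ≤ infDist x K + 2 := by linarith

end IsChebyshev

end Chebyshev

theorem exists_mem_closedBall_add_mul_le {α : Type*} [MetricSpace α] [ProperSpace α]
    {f : α → ℝ} (hf : Continuous f) {y : α} {c : ℝ} (hc : 0 ≤ c)
    (hstep : ∀ z, f y ≤ f z → ∀ᶠ h in 𝓝[>] (0 : ℝ), ∃ z', dist z' z ≤ h ∧ f z + c * h ≤ f z')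
    {R : ℝ} (hR : 0 ≤ R) : ∃ z ∈ closedBall y R, f y + c * R ≤ f z := by
  set S := {r : ℝ | ∃ z ∈ closedBall y r, f y + c * r ≤ f z}
  have hS : IsClosed (S ∩ Icc 0 R) := by
    set T := {p : ℝ × α | p.1 ∈ Icc 0 R ∧ dist p.2 y ≤ p.1 ∧ f y + c * p.1 ≤ f p.2}
    have hT : IsCompact T := by
      refine ((isCompact_Icc (a := 0) (b := R)).prod
        (isCompact_closedBall y R)).of_isClosed_subset ?_ ?_
      · exact (isClosed_Icc.preimage continuous_fst).inter
          ((isClosed_le (continuous_snd.dist continuous_const) continuous_fst).inter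
            (isClosed_le (continuous_const.add (continuous_const.mul continuous_fst))
              (hf.comp continuous_snd)))
      · rintro ⟨r, z⟩ ⟨hr, hzr, -⟩
        exact ⟨hr, hzr.trans hr.2⟩
    -- `S ∩ Icc 0 R` is the projection of the compact set `T`.
    convert (hT.image continuous_fst).isClosed using 1
    ext r
    simp only [S, T, mem_inter_iff, mem_ofPred_eq, mem_image, Prod.exists, exists_and_right,
      exists_eq_right, mem_closedBall]
    tauto
  have hsub : Icc 0 R ⊆ S := by
    refine hS.Icc_subset_of_forall_exists_gt ⟨y, mem_closedBall_self le_rfl, by simp⟩ ?_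
    rintro r ⟨⟨z, hz, hzr⟩, hr, -⟩ r' hr'
    have hyz : f y ≤ f z := le_trans (le_add_of_nonneg_right (mul_nonneg hc hr)) hzr
    obtain ⟨h, ⟨z', hz'z, hz'⟩, hh⟩ :=
      ((hstep z hyz).and (Ioc_mem_nhdsGT (sub_pos.2 (mem_Ioi.1 hr')))).exists
    refine ⟨r + h, ⟨z', ?_, ?_⟩, by linarith [hh.1], by linarith [hh.2]⟩
    · rw [mem_closedBall] at hz ⊢
      linarith [dist_triangle z' z y]
    · linarith
  exact hsub ⟨hR, le_rfl⟩

section SmoothChebyshev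

variable {X : Type*} [NormedAddCommGroup X] [NormedSpace ℝ X] [FiniteDimensional ℝ X] {K : Set X}

theorem IsChebyshev.eventually_exists_add_mul_le_infDist (hK : IsChebyshev K)
    (hsmooth : ∀ x : X, x ≠ 0 → ∃! f : X →L[ℝ] ℝ, ‖f‖ = 1 ∧ f x = ‖x‖) {z : X}
    (hz : 0 < infDist z K) {c : ℝ} (hc : c < 1) :
    ∀ᶠ h in 𝓝[>] (0 : ℝ), ∃ z', dist z' z ≤ h ∧ infDist z K + c * h ≤ infDist z' K := by
  set b := z - hK.proj z
  have hb : ‖b‖ = infDist z K := by rw [← dist_eq_norm, hK.dist_proj]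
  have hb0 : b ≠ 0 := norm_pos_iff.1 (hb ▸ hz)
  set u := ‖b‖⁻¹ • b
  have hu : ‖u‖ = 1 := norm_smul_inv_norm hb0
  have hbu : normingFunctional b u = 1 := by
    simp [u, inv_mul_cancel₀ (norm_ne_zero_iff.2 hb0)]
  clear_value u
  have hsub : ContinuousAt (fun z' => z - hK.proj z') z :=
    (continuous_const.sub hK.continuous_proj).continuousAt
  have hcont : ContinuousAt (fun z' => normingFunctional (z - hK.proj z')) z :=
    (continuousAt_normingFunctional hb0 (hsmooth b hb0)).comp
      (f := fun z' => z - hK.proj z') hsub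
  have hline : Tendsto (fun h : ℝ => z + h • u) (𝓝[>] 0) (𝓝 z) := by
    have : Continuous fun h : ℝ => z + h • u := by fun_prop
    simpa using (this.tendsto 0).mono_left nhdsWithin_le_nhds
  filter_upwards [(hcont.tendsto.comp hline).eventually (ball_mem_nhds _ (sub_pos.2 hc)),
    self_mem_nhdsWithin] with h hJ (hh : 0 < h)
  refine ⟨z + h • u, by simp [dist_eq_norm, norm_smul, hu, abs_of_pos hh], ?_⟩
  set v := hK.proj (z + h • u)
  set g := normingFunctional (z - v)
  have hgu : c ≤ g u := by
    rw [Function.comp_apply, dist_eq_norm] at hJ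
    have := ((g - normingFunctional b).le_opNorm u).trans_lt (by rwa [hu, mul_one])
    change ‖g u - normingFunctional b u‖ < _ at this
    rw [hbu, Real.norm_eq_abs] at this
    linarith [neg_abs_le (g u - 1)]
  have hzv : infDist z K ≤ ‖z - v‖ := by
    rw [← dist_eq_norm]; exact infDist_le_dist_of_mem (hK.proj_mem _)
  calc infDist z K + c * h ≤ ‖z - v‖ + h * g u := by nlinarith
    _ = g (z + h • u - v) := by
      rw [show z + h • u - v = (z - v) + h • u by abel, map_add, map_smul, smul_eq_mul,
        normingFunctional_apply_self]
    _ ≤ ‖z + h • u - v‖ := normingFunctional_apply_le _ _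
    _ = infDist (z + h • u) K := by rw [← dist_eq_norm, hK.dist_proj]

theorem IsChebyshev.exists_infDist_eq_add (hK : IsChebyshev K)
    (hsmooth : ∀ x : X, x ≠ 0 → ∃! f : X →L[ℝ] ℝ, ‖f‖ = 1 ∧ f x = ‖x‖) {y : X}
    (hy : 0 < infDist y K) {R : ℝ} (hR : 0 ≤ R) :
    ∃ z ∈ closedBall y R, infDist z K = infDist y K + R := by
  have hd : Continuous fun x : X => infDist x K := continuous_infDist_pt K
  obtain ⟨z, hz, hmax⟩ := (isCompact_closedBall y R).exists_isMaxOn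
    (nonempty_closedBall.2 hR) hd.continuousOn
  refine ⟨z, hz, le_antisymm ?_ ?_⟩
  · linarith [infDist_le_infDist_add_dist (x := z) (y := y) (s := K), mem_closedBall.1 hz]
  · have hlim : Tendsto (fun c : ℝ => infDist y K + c * R) (𝓝[<] 1) (𝓝 (infDist y K + 1 * R)) :=
      ((continuous_const.add (continuous_id.mul continuous_const)).tendsto 1).mono_left
        nhdsWithin_le_nhds
    rw [one_mul] at hlim
    refine le_of_tendsto hlim ?_
    filter_upwards [Ioo_mem_nhdsLT zero_lt_one] with c hc
    obtain ⟨z', hz', hz'y⟩ := exists_mem_closedBall_add_mul_le hd hc.1.le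
      (fun w hw => hK.eventually_exists_add_mul_le_infDist hsmooth (hy.trans_le hw) hc.2) hR
    exact hz'y.trans (hmax hz')

theorem IsChebyshev.exists_limit_direction (hK : IsChebyshev K)
    (hsmooth : ∀ x : X, x ≠ 0 → ∃! f : X →L[ℝ] ℝ, ‖f‖ = 1 ∧ f x = ‖x‖) {x : X}
    (hx : 0 < infDist x K) :
    ∃ E : X, ‖E‖ = 1 ∧ (∀ w ∈ K, ∀ t : ℝ, 0 ≤ t → 1 ≤ ‖E + t • (hK.proj x - w)‖) ∧
      infDist x K ≤ normingFunctional E (x - hK.proj x) := by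
  set p := hK.proj x
  set d := infDist x K
  choose y hyx hyd using fun k : ℕ => hK.exists_infDist_eq_add hsmooth hx (Nat.cast_nonneg k)
  have hyw : ∀ k : ℕ, ∀ w ∈ K, d + k ≤ ‖y k - w‖ := fun k w hw =>
    hyd k ▸ dist_eq_norm (y k) w ▸ infDist_le_dist_of_mem hw
  have hyp : ∀ k : ℕ, ‖y k - p‖ = d + k := fun k => by
    refine le_antisymm ?_ (hyw k p (hK.proj_mem x))
    calc ‖y k - p‖ ≤ ‖y k - x‖ + ‖x - p‖ := norm_sub_le_norm_sub_add_norm_sub _ _ _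
      _ ≤ k + d := add_le_add (mem_closedBall_iff_norm.1 (hyx k))
        (by rw [← dist_eq_norm, hK.dist_proj])
      _ = d + k := add_comm _ _
  have hμ : ∀ k : ℕ, 0 < d + k := fun k => by positivity
  set e : ℕ → X := fun k => (d + k)⁻¹ • (y k - p)
  have he : ∀ k : ℕ, ‖e k‖ = 1 := fun k => by
    rw [norm_smul, hyp, norm_inv, Real.norm_of_nonneg (hμ k).le, inv_mul_cancel₀ (hμ k).ne']
  have hμe : ∀ k : ℕ, (d + k) • e k = y k - p := fun k => smul_inv_smul₀ (hμ k).ne' _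
  have hJe : ∀ k : ℕ, d ≤ normingFunctional (e k) (x - p) := fun k => by
    have h1 : normingFunctional (e k) (y k - p) = d + k := by
      rw [← hμe, map_smul, normingFunctional_apply_self, he, smul_eq_mul, mul_one]
    have h2 := (normingFunctional_apply_le (e k) (y k - x)).trans
      (mem_closedBall_iff_norm.1 (hyx k))
    rw [show x - p = (y k - p) - (y k - x) by abel, map_sub, h1]
    linarith
  obtain ⟨E, hE, φ, hφ, hlim⟩ :=
    (isCompact_sphere (0 : X) 1).tendsto_subseq fun k => mem_sphere_zero_iff_norm.2 (he k)
  have hE1 : ‖E‖ = 1 := mem_sphere_zero_iff_norm.1 hE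
  have hE0 : E ≠ 0 := norm_ne_zero_iff.1 (hE1 ▸ one_ne_zero)
  refine ⟨E, hE1, fun w hw t ht => ?_, ?_⟩
  · rcases ht.eq_or_lt with rfl | ht
    · simp [hE1]
    refine ge_of_tendsto (hlim.add_const _).norm ?_
    filter_upwards [(tendsto_natCast_atTop_atTop.comp hφ.tendsto_atTop).eventually_ge_atTop t⁻¹]
      with j hj
    refine one_le_norm_add_smul_of_le_norm_smul_add (μ := d + φ j) (he _) ?_ ht.le ?_
    · rw [Function.comp_apply, hμe, sub_add_sub_cancel]
      exact hyw _ w hw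
    · rw [← inv_le_iff_one_le_mul₀' ht]
      exact hj.trans (le_add_of_nonneg_left infDist_nonneg)
  · have hJ := (continuousAt_normingFunctional hE0 (hsmooth E hE0)).tendsto.comp hlim
    exact ge_of_tendsto' ((ContinuousLinearMap.apply ℝ ℝ (x - p)).continuous.tendsto _ |>.comp hJ)
      fun j => hJe (φ j)

theorem IsChebyshev.exists_separating_functional (hK : IsChebyshev K)
    (hsmooth : ∀ x : X, x ≠ 0 → ∃! f : X →L[ℝ] ℝ, ‖f‖ = 1 ∧ f x = ‖x‖) {x : X} (hx : x ∉ K) :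
    ∃ (f : X →L[ℝ] ℝ) (c : ℝ), (∀ w ∈ K, f w ≤ c) ∧ c < f x := by
  have hd : 0 < infDist x K :=
    hK.dist_proj x ▸ dist_pos.2 fun h => hx (h ▸ hK.proj_mem x)
  obtain ⟨E, hE, hray, hEx⟩ := hK.exists_limit_direction hsmooth hd
  have hE0 : E ≠ 0 := norm_ne_zero_iff.1 (hE ▸ one_ne_zero)
  refine ⟨normingFunctional E, normingFunctional E (hK.proj x), fun w hw => ?_, ?_⟩
  · obtain ⟨g, hg, hgE, hgw⟩ := exists_dual_vector_nonneg_of_norm_le_norm_add_smul hE (hray w hw)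
    rw [eq_normingFunctional hE0 (hsmooth E hE0) hg.le (by rw [hgE, hE]), map_sub] at hgw
    linarith
  · rw [map_sub] at hEx
    linarith

end SmoothChebyshev

/-- In a finite-dimensional smooth real normed space (for every nonzero `x` there is a
unique norm-one continuous linear functional `f` with `f x = ‖x‖`), every Čebyšev set is
convex. -/
theorem chebyshev_convex_of_finiteDimensional_smooth {X : Type*} [NormedAddCommGroup X]
    [NormedSpace ℝ X] [FiniteDimensional ℝ X]
    (hsmooth : ∀ x : X, x ≠ 0 → ∃! f : X →L[ℝ] ℝ, ‖f‖ = 1 ∧ f x = ‖x‖)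
    (K : Set X)
    (hcheb : ∀ x : X, ∃! v : X, v ∈ K ∧ ‖x - v‖ = Metric.infDist x K) :
    Convex ℝ K := by
  have hK : IsChebyshev K := fun x => by simpa only [dist_eq_norm] using hcheb x
  refine convex_of_forall_notMem_exists_le_lt fun x hx => ?_
  obtain ⟨f, c, hfK, hfx⟩ := hK.exists_separating_functional hsmooth hx
  exact ⟨f, c, hfK, hfx⟩
end
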